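/- arXiv:2105.14200 — 8 statements merged into one kernel-verified Lean document; each statement's English description precedes it below -/
import Mathlib

section
/- Let p be a real number of the form p = 2i/(2j+1) with i, j positive integers and p > 2. Then for every real number t, (p-1)·p^{p-2}·|t|^p + |t+1|^p - p·sgn(t+1)·|t+1|^{p-1}·t ≥ p^{p-2}·(p-1)^{1-p}. -/
/-!
Write `F t` for the left-hand side. Its derivative is
`p (p - 1) t (|p t| ^ (p - 2) - |t + 1| ^ (p - 2))`, so `F` decreases on `(-∞, -1/(p+1)]` and
`[0, 1/(p-1)]` and increases on `[-1/(p+1), 0]` and `[1/(p-1), ∞)`. At `1/(p-1)` the bound is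
attained exactly. At `-1/(p+1)` it reduces, with `r = p - 1 ≥ 1`, to `(1 + 2/r) ^ r ≤ 2r + 1`,
an equality at `r = 1`; differentiating `log (2r + 1) - r log (1 + 2/r)` in `r` and using
`log y ≤ sinh (log y)` shows that the gap only grows.
-/

open Real Set Filter Topology Asymptotics

theorem log_le_half_sub_inv {y : ℝ} (hy : 1 ≤ y) : log y ≤ (y - y⁻¹) / 2 := by
  rw [← sinh_log (by positivity)]
  exact self_le_sinh_iff.2 (log_nonneg hy)

theorem one_add_two_div_rpow_le {r : ℝ} (hr : 1 ≤ r) : (1 + 2 / r) ^ r ≤ 2 * r + 1 := by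
  let k : ℝ → ℝ := fun z => log (2 * z + 1) - z * log (1 + 2 / z)
  have hderiv : ∀ z : ℝ, 0 < z →
      HasDerivAt k (2 / (2 * z + 1) + 2 / (z + 2) - log (1 + 2 / z)) z := by
    intro z hz
    have hlin : HasDerivAt (fun z : ℝ => 2 * z + 1) 2 z := by
      simpa using ((hasDerivAt_id z).const_mul 2).add_const 1
    have hfrac : HasDerivAt (fun z : ℝ => 1 + 2 / z) (-(2 / z ^ 2)) z := by
      simpa [div_eq_mul_inv] using ((hasDerivAt_inv hz.ne').const_mul 2).const_add 1
    refine ((hlin.log (by positivity)).sub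
      ((hasDerivAt_id' z).mul (hfrac.log (by positivity)))).congr_deriv ?_
    field_simp
    ring
  have hderiv_nonneg : ∀ z : ℝ, 1 < z → 0 ≤ 2 / (2 * z + 1) + 2 / (z + 2) - log (1 + 2 / z) := by
    intro z hz
    have hz0 : 0 < z := by linarith
    have hlog := log_le_half_sub_inv (y := 1 + 2 / z) (le_add_of_nonneg_right (by positivity))
    have hgap : 2 / (2 * z + 1) + 2 / (z + 2) - ((1 + 2 / z) - (1 + 2 / z)⁻¹) / 2
        = 2 * (z + 1) * (z - 1) / (z * (2 * z + 1) * (z + 2)) := by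
      field_simp
      ring
    have : 0 ≤ 2 * (z + 1) * (z - 1) / (z * (2 * z + 1) * (z + 2)) :=
      div_nonneg (by nlinarith) (by positivity)
    linarith
  have hmono : MonotoneOn k (Ici 1) := by
    refine monotoneOn_of_hasDerivWithinAt_nonneg (convex_Ici 1)
      (f' := fun z => 2 / (2 * z + 1) + 2 / (z + 2) - log (1 + 2 / z))
      (fun z hz => ?_) (fun z hz => ?_) (fun z hz => ?_)
    all_goals simp only [interior_Ici, mem_Ici, mem_Ioi] at hz
    · exact (hderiv z (by linarith)).continuousAt.continuousWithinAt
    · exact (hderiv z (by linarith)).hasDerivWithinAt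
    · exact hderiv_nonneg z hz
  have hk : k 1 ≤ k r := hmono self_mem_Ici hr hr
  have hk1 : k 1 = 0 := by norm_num [k]
  rw [rpow_le_iff_le_log (by positivity) (by positivity)]
  simp only [k] at hk hk1
  linarith

theorem sub_one_rpow_one_sub_le {p : ℝ} (hp : 2 ≤ p) :
    (p - 1) ^ (1 - p) ≤ (2 * p - 1) * (p + 1) ^ (1 - p) := by
  have hp1 : 0 < p - 1 := by linarith
  have hp1' : 0 < p + 1 := by linarith
  have h := one_add_two_div_rpow_le (r := p - 1) (by linarith)
  rw [show 1 + 2 / (p - 1) = (p + 1) / (p - 1) by field_simp; ring, div_rpow hp1'.le hp1.le,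
    div_le_iff₀ (rpow_pos_of_pos hp1 _)] at h
  rw [show (1 : ℝ) - p = -(p - 1) by ring, rpow_neg hp1.le, rpow_neg hp1'.le,
    ← div_eq_mul_inv, le_div_iff₀ (rpow_pos_of_pos hp1' _), inv_mul_le_iff₀ (rpow_pos_of_pos hp1 _)]
  linarith

theorem sign_mul_abs_rpow_add_one (x r : ℝ) : Real.sign x * |x| ^ (r + 1) = x * |x| ^ r := by
  rcases lt_trichotomy x 0 with hx | rfl | hx
  · rw [Real.sign_of_neg hx, rpow_add_one (abs_pos.2 hx.ne).ne', abs_of_neg hx]; ring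
  · simp
  · rw [Real.sign_of_pos hx, rpow_add_one (abs_pos.2 hx.ne').ne', abs_of_pos hx]; ring

theorem hasDerivAt_mul_abs_rpow {q : ℝ} (hq : 0 < q) (x : ℝ) :
    HasDerivAt (fun x => x * |x| ^ q) ((q + 1) * |x| ^ q) x := by
  rcases eq_or_ne x 0 with rfl | hx
  · rw [abs_zero, zero_rpow hq.ne', mul_zero, hasDerivAt_iff_isLittleO_nhds_zero]
    have hlim : Tendsto (fun h : ℝ => |h| ^ q) (𝓝 0) (𝓝 0) := by
      simpa [zero_rpow hq.ne'] using (continuous_abs.rpow_const fun _ => Or.inr hq.le).tendsto 0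
    simpa [mul_comm] using ((isLittleO_one_iff ℝ).2 hlim).mul_isBigO (isBigO_refl (fun h : ℝ => h) _)
  · have habs := (hasDerivAt_abs hx).rpow_const (p := q) (Or.inl (abs_ne_zero.2 hx))
    refine ((hasDerivAt_id' x).mul habs).congr_deriv ?_
    have : |x| * |x| ^ (q - 1) = |x| ^ q := by
      rw [mul_comm, ← rpow_add_one (abs_ne_zero.2 hx), sub_add_cancel]
    rw [← mul_assoc, ← mul_assoc, self_mul_sign]
    linear_combination q * this

theorem le_of_hasDerivAt_nonpos_of_nonneg {f f' : ℝ → ℝ} {b x : ℝ}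
    (hf : ∀ y, HasDerivAt f (f' y) y) (hl : ∀ y ∈ Ioo x b, f' y ≤ 0)
    (hr : ∀ y ∈ Ioo b x, 0 ≤ f' y) : f b ≤ f x := by
  have hcont : Continuous f := continuous_iff_continuousAt.2 fun y => (hf y).continuousAt
  rcases le_total x b with hxb | hbx
  · refine antitoneOn_of_hasDerivWithinAt_nonpos (convex_Icc x b) hcont.continuousOn
      (fun y _ => (hf y).hasDerivWithinAt) (fun y hy => hl y ?_) ⟨le_rfl, hxb⟩ ⟨hxb, le_rfl⟩ hxb
    rwa [interior_Icc] at hy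
  · refine monotoneOn_of_hasDerivWithinAt_nonneg (convex_Icc b x) hcont.continuousOn
      (fun y _ => (hf y).hasDerivWithinAt) (fun y hy => hr y ?_) ⟨le_rfl, hbx⟩ ⟨hbx, le_rfl⟩ hbx
    rwa [interior_Icc] at hy

section

variable {p t : ℝ}

/-- With `φ s = |s| ^ p`, the last two terms are `φ (t + 1) + φ' (t + 1) * (1 - (t + 1))`. -/
noncomputable def tangentExcess (p t : ℝ) : ℝ :=
  (p - 1) * p ^ (p - 2) * |t| ^ p + |t + 1| ^ p - p * Real.sign (t + 1) * |t + 1| ^ (p - 1) * t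

theorem hasDerivAt_tangentExcess (hp : 2 < p) (t : ℝ) :
    HasDerivAt (tangentExcess p)
      (p * (p - 1) * t * (|p * t| ^ (p - 2) - |t + 1| ^ (p - 2))) t := by
  have hshift : HasDerivAt (fun t : ℝ => t + 1) 1 t := (hasDerivAt_id' t).add_const 1
  have h1 := (hasDerivAt_abs_rpow t (by linarith : 1 < p)).const_mul ((p - 1) * p ^ (p - 2))
  have h2 := (hasDerivAt_abs_rpow (t + 1) (by linarith : 1 < p)).comp t hshift
  have h3 := (((hasDerivAt_mul_abs_rpow (by linarith : 0 < p - 2) (t + 1)).comp t hshift).mul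
    (hasDerivAt_id' t)).const_mul p
  have hfun : tangentExcess p = fun t =>
      (p - 1) * p ^ (p - 2) * |t| ^ p + |t + 1| ^ p - p * ((t + 1) * |t + 1| ^ (p - 2) * t) := by
    funext t
    rw [tangentExcess, show p - 1 = p - 2 + 1 by ring, mul_assoc p, sign_mul_abs_rpow_add_one]
    ring
  rw [hfun]
  refine ((h1.add h2).sub h3).congr_deriv ?_
  rw [abs_mul, mul_rpow (abs_nonneg p) (abs_nonneg t), abs_of_pos (by linarith : 0 < p)]
  simp only [Function.comp_apply]
  ring

theorem tangentExcess_one_div_sub_one (hp : 1 < p) :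
    tangentExcess p (1 / (p - 1)) = p ^ (p - 2) * (p - 1) ^ (1 - p) := by
  have hp1 : 0 < p - 1 := by linarith
  have hp0 : 0 < p := by linarith
  have ht : 1 / (p - 1) + 1 = p / (p - 1) := by field_simp; ring
  rw [tangentExcess, ht, Real.sign_of_pos (by positivity), abs_of_pos (by positivity),
    abs_of_pos (by positivity), div_rpow hp0.le hp1.le, div_rpow hp0.le hp1.le,
    div_rpow zero_le_one hp1.le, one_rpow, show (1 : ℝ) - p = -(p - 1) by ring, rpow_neg hp1.le,
    rpow_sub_one hp0.ne', rpow_sub_one hp1.ne', rpow_sub hp0, rpow_two]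
  field_simp
  ring

theorem tangentExcess_neg_one_div_add_one (hp : 0 < p) :
    tangentExcess p (-1 / (p + 1)) = (2 * p - 1) * p ^ (p - 2) * (p + 1) ^ (1 - p) := by
  have hp1 : 0 < p + 1 := by linarith
  have ht : -1 / (p + 1) + 1 = p / (p + 1) := by field_simp; ring
  have habs : |-1 / (p + 1)| = 1 / (p + 1) := by rw [abs_div, abs_neg, abs_one, abs_of_pos hp1]
  rw [tangentExcess, ht, habs, Real.sign_of_pos (by positivity), abs_of_pos (by positivity),
    div_rpow hp.le hp1.le, div_rpow hp.le hp1.le,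
    div_rpow zero_le_one hp1.le, one_rpow, show (1 : ℝ) - p = -(p - 1) by ring, rpow_neg hp1.le,
    rpow_sub_one hp.ne', rpow_sub_one hp1.ne', rpow_sub hp, rpow_two]
  field_simp
  ring

theorem tangentExcess_one_div_sub_one_le (hp : 2 < p) (ht : 0 ≤ t) :
    tangentExcess p (1 / (p - 1)) ≤ tangentExcess p t := by
  have hp1 : 0 < p - 1 := by linarith
  have hq : 0 ≤ p - 2 := by linarith
  refine le_of_hasDerivAt_nonpos_of_nonneg (hasDerivAt_tangentExcess hp) ?_ ?_
  · rintro y ⟨hty, hy⟩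
    rw [lt_div_iff₀ hp1] at hy
    refine mul_nonpos_of_nonneg_of_nonpos (mul_nonneg (by nlinarith) (by linarith))
      (sub_nonpos.2 (rpow_le_rpow (abs_nonneg _) ?_ hq))
    rw [abs_of_pos (by nlinarith), abs_of_pos (by linarith)]
    linarith
  · rintro y ⟨hy, -⟩
    rw [div_lt_iff₀ hp1] at hy
    have hy0 : 0 < y := by nlinarith
    refine mul_nonneg (mul_nonneg (by nlinarith) hy0.le)
      (sub_nonneg.2 (rpow_le_rpow (abs_nonneg _) ?_ hq))
    rw [abs_of_pos (by nlinarith), abs_of_pos (by linarith)]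
    linarith

theorem tangentExcess_neg_one_div_add_one_le (hp : 2 < p) (ht : t ≤ 0) :
    tangentExcess p (-1 / (p + 1)) ≤ tangentExcess p t := by
  have hp1 : 0 < p + 1 := by linarith
  have hq : 0 ≤ p - 2 := by linarith
  refine le_of_hasDerivAt_nonpos_of_nonneg (hasDerivAt_tangentExcess hp) ?_ ?_
  · rintro y ⟨-, hy⟩
    rw [lt_div_iff₀ hp1] at hy
    refine mul_nonpos_of_nonpos_of_nonneg (mul_nonpos_of_nonneg_of_nonpos (by nlinarith)
      (by nlinarith)) (sub_nonneg.2 (rpow_le_rpow (abs_nonneg _) ?_ hq))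
    rw [abs_of_neg (by nlinarith : p * y < 0)]
    exact abs_le.2 ⟨by nlinarith, by nlinarith⟩
  · rintro y ⟨hy, hyt⟩
    rw [div_lt_iff₀ hp1] at hy
    refine mul_nonneg_of_nonpos_of_nonpos (mul_nonpos_of_nonneg_of_nonpos (by nlinarith)
      (by linarith)) (sub_nonpos.2 (rpow_le_rpow (abs_nonneg _) ?_ hq))
    rw [abs_of_nonpos (by nlinarith : p * y ≤ 0), abs_of_pos (by nlinarith)]
    nlinarith

end

theorem stmt0_general (p : ℝ) (hp2 : 2 < p) (t : ℝ) :
    (p - 1) * p ^ (p - 2) * |t| ^ p + |t + 1| ^ p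
      - p * Real.sign (t + 1) * |t + 1| ^ (p - 1) * t
      ≥ p ^ (p - 2) * (p - 1) ^ (1 - p) := by
  change p ^ (p - 2) * (p - 1) ^ (1 - p) ≤ tangentExcess p t
  rcases le_total 0 t with ht | ht
  · rw [← tangentExcess_one_div_sub_one (by linarith)]
    exact tangentExcess_one_div_sub_one_le hp2 ht
  · calc p ^ (p - 2) * (p - 1) ^ (1 - p)
        ≤ (2 * p - 1) * p ^ (p - 2) * (p + 1) ^ (1 - p) := by
          rw [mul_comm (2 * p - 1), mul_assoc]
          exact mul_le_mul_of_nonneg_left (sub_one_rpow_one_sub_le hp2.le) (by positivity)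
      _ = tangentExcess p (-1 / (p + 1)) := (tangentExcess_neg_one_div_add_one (by linarith)).symm
      _ ≤ tangentExcess p t := tangentExcess_neg_one_div_add_one_le hp2 ht

/-- Lemma 1: for `p = 2i/(2j+1) > 2` (even numerator, odd denominator) and all real `t`,
`(p-1) p^{p-2} t^p + (t+1)^p - p (t+1)^{p-1} t ≥ p^{p-2} (p-1)^{1-p}`, where the real power
`t ^ p` is interpreted as `|t| ^ p` and `t ^ (p-1)` as `sgn t * |t| ^ (p-1)`. -/
theorem stmt0 (p : ℝ) (i j : ℕ) (hi : 0 < i) (hj : 0 < j)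
    (hp : p = 2 * (i : ℝ) / (2 * (j : ℝ) + 1)) (hp2 : 2 < p) (t : ℝ) :
    (p - 1) * p ^ (p - 2) * |t| ^ p + |t + 1| ^ p
      - p * Real.sign (t + 1) * |t + 1| ^ (p - 1) * t
      ≥ p ^ (p - 2) * (p - 1) ^ (1 - p) :=
  stmt0_general p hp2 t
end

section
/- The function g(x) = x^{x-2}·(x-1)^{1-x} is strictly decreasing on the interval (2, ∞); in particular, p^{p-2}·(p-1)^{1-p} ≤ 1 for every real p ≥ 2. -/
/-!
Taking logarithms, it suffices that `φ(x) = (x - 2) log x + (1 - x) log (x - 1)` is strictly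
decreasing. Its derivative is `log (x / (x - 1)) - 2 / x`, and `log (x / (x - 1)) < 1 / (x - 1)`
(from `log y < y - 1`), which is `≤ 2 / x` exactly when `x ≥ 2`. At `x = 2` the function equals
`1`, whence the bound.
-/

open Real Set

lemma log_sub_log_sub_one_lt {x : ℝ} (hx : 1 < x) : log x - log (x - 1) < (x - 1)⁻¹ := by
  have hx1 : 0 < x - 1 := by linarith
  rw [← log_div (by linarith) hx1.ne']
  calc log (x / (x - 1)) < x / (x - 1) - 1 :=
        log_lt_sub_one_of_pos (by positivity) (by rw [Ne, div_eq_one_iff_eq hx1.ne']; linarith)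
    _ = (x - 1)⁻¹ := by field_simp; ring

lemma hasDerivAt_sub_two_mul_log_add_one_sub_mul_log_sub_one {x : ℝ} (hx : 1 < x) :
    HasDerivAt (fun x => (x - 2) * log x + (1 - x) * log (x - 1))
      (log x - log (x - 1) - 2 / x) x := by
  have hx0 : x ≠ 0 := by linarith
  have hx1 : x - 1 ≠ 0 := by linarith
  refine ((((hasDerivAt_id' x).sub_const 2).fun_mul (hasDerivAt_log hx0)).fun_add
    (((hasDerivAt_id' x).const_sub 1).fun_mul (((hasDerivAt_id' x).sub_const 1).log hx1))).congr_deriv ?_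
  field_simp
  ring

lemma strictAntiOn_sub_two_mul_log_add_one_sub_mul_log_sub_one :
    StrictAntiOn (fun x => (x - 2) * log x + (1 - x) * log (x - 1)) (Ici 2) := by
  have hderiv (x : ℝ) (hx : x ∈ Ici (2 : ℝ)) :=
    hasDerivAt_sub_two_mul_log_add_one_sub_mul_log_sub_one (by linarith [mem_Ici.mp hx])
  refine strictAntiOn_of_hasDerivWithinAt_neg (convex_Ici 2)
    (fun x hx => (hderiv x hx).continuousAt.continuousWithinAt)
    (fun x hx => (hderiv x (interior_subset hx)).hasDerivWithinAt) fun x hx => ?_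
  rw [interior_Ici, mem_Ioi] at hx
  have hinv : (x - 1)⁻¹ < 2 / x := by
    rw [inv_eq_one_div, div_lt_div_iff₀ (by linarith) (by linarith)]
    linarith
  linarith [log_sub_log_sub_one_lt (show 1 < x by linarith)]

lemma rpow_sub_two_mul_sub_one_rpow_eq_exp {x : ℝ} (hx : 1 < x) :
    x ^ (x - 2) * (x - 1) ^ (1 - x) = exp ((x - 2) * log x + (1 - x) * log (x - 1)) := by
  rw [rpow_def_of_pos (by linarith), rpow_def_of_pos (by linarith), ← exp_add]
  ring_nf

lemma strictAntiOn_rpow_sub_two_mul_sub_one_rpow :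
    StrictAntiOn (fun x : ℝ => x ^ (x - 2) * (x - 1) ^ (1 - x)) (Ici 2) :=
  (exp_strictMono.comp_strictAntiOn strictAntiOn_sub_two_mul_log_add_one_sub_mul_log_sub_one).congr
    fun x hx => (rpow_sub_two_mul_sub_one_rpow_eq_exp (by linarith [mem_Ici.mp hx])).symm

/-- The function `x ↦ x^(x-2) (x-1)^(1-x)` is strictly decreasing on `(2, ∞)`;
in particular `p^(p-2) (p-1)^(1-p) ≤ 1` for all `p ≥ 2`. -/
theorem stmt1 :
    StrictAntiOn (fun x : ℝ => x ^ (x - 2) * (x - 1) ^ (1 - x)) (Set.Ioi 2) ∧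
    ∀ p : ℝ, 2 ≤ p → p ^ (p - 2) * (p - 1) ^ (1 - p) ≤ 1 := by
  refine ⟨strictAntiOn_rpow_sub_two_mul_sub_one_rpow.mono Ioi_subset_Ici_self, fun p hp => ?_⟩
  calc p ^ (p - 2) * (p - 1) ^ (1 - p) ≤ (2 : ℝ) ^ ((2 : ℝ) - 2) * ((2 : ℝ) - 1) ^ (1 - (2 : ℝ)) :=
        strictAntiOn_rpow_sub_two_mul_sub_one_rpow.antitoneOn self_mem_Ici hp hp
    _ = 1 := by norm_num
end

section
/- For every real number p ≥ 2, ln(2p-1) ≥ (p-1)·ln((p+1)/(p-1)); equivalently, p^{p-2}·(p-1)^{1-p} ≤ p^{p-2}·(2p-1)·(p+1)^{1-p}. -/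
/-!
The gap `G(p) = log (2p - 1) - (p - 1) log ((p + 1)/(p - 1))` vanishes at `p = 2`. Its derivative is
`2/(2p - 1) + 2/(p + 1) - log y` with `y = (p + 1)/(p - 1) ≥ 1`, and the bound
`log y ≤ sinh (log y) = (y - y⁻¹)/2 = 2p/((p - 1)(p + 1))` makes it nonnegative as soon as
`p ≥ 2`. Hence `G` is monotone on `[2, ∞)` and nonnegative there. The second inequality is the
first one after dividing by `p^(p-2)` and taking logarithms.
-/

open Real Set

lemma Real.log_le_sub_inv_div_two {x : ℝ} (hx : 1 ≤ x) : log x ≤ (x - x⁻¹) / 2 := by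
  rw [← sinh_log (by linarith)]
  exact self_le_sinh_iff.2 (log_nonneg hx)

noncomputable def logGap (p : ℝ) : ℝ :=
  log (2 * p - 1) - (p - 1) * log ((p + 1) / (p - 1))

lemma hasDerivAt_logGap {x : ℝ} (hx : 1 < x) :
    HasDerivAt logGap (2 / (2 * x - 1) + 2 / (x + 1) - log ((x + 1) / (x - 1))) x := by
  have h₁ : 2 * x - 1 ≠ 0 := by linarith
  have h₂ : x + 1 ≠ 0 := by linarith
  have h₃ : x - 1 ≠ 0 := by linarith
  have hlin : HasDerivAt (fun p : ℝ => 2 * p - 1) 2 x := by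
    simpa using ((hasDerivAt_id x).const_mul 2).sub_const 1
  have hsub : HasDerivAt (fun p : ℝ => p - 1) 1 x := (hasDerivAt_id' x).sub_const 1
  have hquot : HasDerivAt (fun p : ℝ => (p + 1) / (p - 1))
      ((1 * (x - 1) - (x + 1) * 1) / (x - 1) ^ 2) x :=
    ((hasDerivAt_id' x).add_const 1).div hsub h₃
  have hgap := (hlin.log h₁).sub (hsub.mul (hquot.log (div_ne_zero h₂ h₃)))
  refine hgap.congr_deriv ?_
  field_simp
  ring

lemma logGap_deriv_nonneg {x : ℝ} (hx : 2 ≤ x) :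
    0 ≤ 2 / (2 * x - 1) + 2 / (x + 1) - log ((x + 1) / (x - 1)) := by
  have h₁ : 0 < x - 1 := by linarith
  have hy : 1 ≤ (x + 1) / (x - 1) := by rw [le_div_iff₀ h₁]; linarith
  have hsinh : ((x + 1) / (x - 1) - ((x + 1) / (x - 1))⁻¹) / 2
      ≤ 2 / (2 * x - 1) + 2 / (x + 1) := by
    have h₂ : 0 < x + 1 := by linarith
    have h₃ : 0 < 2 * x - 1 := by linarith
    rw [inv_div, div_add_div _ _ h₃.ne' h₂.ne', div_sub_div _ _ h₁.ne' h₂.ne', div_div,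
      div_le_div_iff₀ (by positivity) (by positivity)]
    nlinarith [mul_pos h₁ h₂, mul_pos (mul_pos h₁ h₂) h₂]
  linarith [log_le_sub_inv_div_two hy]

lemma monotoneOn_logGap : MonotoneOn logGap (Ici 2) := by
  have hderiv : ∀ x ∈ Ici (2 : ℝ), HasDerivAt logGap
      (2 / (2 * x - 1) + 2 / (x + 1) - log ((x + 1) / (x - 1))) x :=
    fun x hx => hasDerivAt_logGap (by linarith [mem_Ici.1 hx])
  refine monotoneOn_of_hasDerivWithinAt_nonneg (convex_Ici 2)
    (fun x hx => (hderiv x hx).continuousAt.continuousWithinAt)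
    (fun x hx => (hderiv x (interior_subset hx)).hasDerivWithinAt)
    fun x hx => logGap_deriv_nonneg (interior_subset hx)

lemma logGap_nonneg {p : ℝ} (hp : 2 ≤ p) : 0 ≤ logGap p := by
  have h₂ : logGap 2 = 0 := by norm_num [logGap]
  exact h₂ ▸ monotoneOn_logGap self_mem_Ici hp hp

/-- For every real `p ≥ 2`, `ln(2p-1) ≥ (p-1) ln((p+1)/(p-1))`; equivalently,
`p^(p-2) (p-1)^(1-p) ≤ p^(p-2) (2p-1) (p+1)^(1-p)`. -/
theorem stmt2 (p : ℝ) (hp : 2 ≤ p) :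
    Real.log (2 * p - 1) ≥ (p - 1) * Real.log ((p + 1) / (p - 1)) ∧
    p ^ (p - 2) * (p - 1) ^ (1 - p) ≤ p ^ (p - 2) * (2 * p - 1) * (p + 1) ^ (1 - p) := by
  have hlog : (p - 1) * log ((p + 1) / (p - 1)) ≤ log (2 * p - 1) :=
    sub_nonneg.1 (logGap_nonneg hp)
  refine ⟨hlog, ?_⟩
  rw [mul_assoc]
  gcongr
  rw [log_div (by linarith) (by linarith)] at hlog
  rw [rpow_def_of_pos (by linarith), rpow_def_of_pos (by linarith),
    ← exp_log (show 0 < 2 * p - 1 by linarith), ← exp_add, exp_le_exp]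
  linarith
end

section
/- Let p > 2 be real and let f_p(t) = p·t^{p-1} + (1-t)^p - t^p for t ∈ [0, 1/2]. Then f_p has a unique critical point t_p in the open interval (0, 1/2) (i.e., f_p'(t_p) = 0 and f_p' vanishes at no other point of (0, 1/2)), and f_p(t_p) is the minimum value of f_p on [0, 1/2]. -/
/-!
Up to the factor `p`, the derivative of `f_p` is
`g_p(t) = (p-1) t^(p-2) - (1-t)^(p-1) - t^(p-1)`. On `(0, 1/2)` the derivative of `g_p` is
`(p-1) ((p-2) t^(p-3) + (1-t)^(p-2) - t^(p-2))`, positive because `t < 1 - t`, so `g_p` is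
strictly increasing on `[0, 1/2]`. Since `g_p(0) = -1` and `g_p(1/2) = (p-2) 2^(2-p) > 0`, it has
exactly one zero `t_p` there; `f_p` decreases before `t_p` and increases after it.
-/

open Set

noncomputable def fp (p t : ℝ) : ℝ := p * t ^ (p - 1) + (1 - t) ^ p - t ^ p

noncomputable def gp (p t : ℝ) : ℝ := (p - 1) * t ^ (p - 2) - (1 - t) ^ (p - 1) - t ^ (p - 1)

theorem hasDerivAt_fp {p : ℝ} (hp : 2 ≤ p) (t : ℝ) : HasDerivAt (fp p) (p * gp p t) t := by
  have hp1 : 1 ≤ p - 1 := by linarith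
  have hpow : HasDerivAt (fun t : ℝ => t ^ (p - 1)) ((p - 1) * t ^ (p - 1 - 1)) t :=
    Real.hasDerivAt_rpow_const (Or.inr hp1)
  have hpow' : HasDerivAt (fun t : ℝ => t ^ p) (p * t ^ (p - 1)) t :=
    Real.hasDerivAt_rpow_const (Or.inr (by linarith))
  have hrefl : HasDerivAt (fun t : ℝ => (1 - t) ^ p) (p * (1 - t) ^ (p - 1) * -1) t :=
    (Real.hasDerivAt_rpow_const (Or.inr (by linarith))).comp t ((hasDerivAt_id t).const_sub 1)
  refine (((hpow.const_mul p).add hrefl).sub hpow').congr_deriv ?_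
  rw [gp, show p - 1 - 1 = p - 2 by ring]
  ring

theorem continuous_gp {p : ℝ} (hp : 2 ≤ p) : Continuous (gp p) := by
  unfold gp
  fun_prop (disch := linarith)

theorem hasDerivAt_gp (p : ℝ) {t : ℝ} (ht₀ : 0 < t) (ht₁ : t < 1) :
    HasDerivAt (gp p)
      ((p - 1) * ((p - 2) * t ^ (p - 3) + (1 - t) ^ (p - 2) - t ^ (p - 2))) t := by
  have hpow (q : ℝ) : HasDerivAt (fun t : ℝ => t ^ q) (q * t ^ (q - 1)) t :=
    Real.hasDerivAt_rpow_const (Or.inl ht₀.ne')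
  have hrefl : HasDerivAt (fun t : ℝ => (1 - t) ^ (p - 1))
      ((p - 1) * (1 - t) ^ (p - 1 - 1) * -1) t :=
    (Real.hasDerivAt_rpow_const (Or.inl (by linarith))).comp t ((hasDerivAt_id t).const_sub 1)
  refine ((((hpow (p - 2)).const_mul (p - 1)).sub hrefl).sub (hpow (p - 1))).congr_deriv ?_
  rw [show p - 2 - 1 = p - 3 by ring, show p - 1 - 1 = p - 2 by ring]
  ring

theorem strictMonoOn_gp {p : ℝ} (hp : 2 < p) : StrictMonoOn (gp p) (Icc 0 (1 / 2)) := by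
  refine strictMonoOn_of_deriv_pos (convex_Icc _ _) (continuous_gp hp.le).continuousOn ?_
  rw [interior_Icc]
  rintro t ⟨ht₀, ht₁⟩
  rw [(hasDerivAt_gp p ht₀ (by linarith)).deriv]
  have hreflect : t ^ (p - 2) < (1 - t) ^ (p - 2) :=
    Real.rpow_lt_rpow ht₀.le (by linarith) (by linarith)
  have hsing : 0 < (p - 2) * t ^ (p - 3) := mul_pos (by linarith) (Real.rpow_pos_of_pos ht₀ _)
  exact mul_pos (by linarith) (by linarith)

theorem gp_zero {p : ℝ} (hp : 2 < p) : gp p 0 = -1 := by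
  simp [gp, Real.zero_rpow (show p - 2 ≠ 0 by linarith),
    Real.zero_rpow (show p - 1 ≠ 0 by linarith)]

theorem gp_half (p : ℝ) : gp p (1 / 2) = (p - 2) * (1 / 2) ^ (p - 2) := by
  rw [gp, show (1 : ℝ) - 1 / 2 = 1 / 2 by norm_num, show p - 1 = (p - 2) + 1 by ring,
    Real.rpow_add_one (by norm_num)]
  ring

theorem exists_mem_Ioo_gp_eq_zero {p : ℝ} (hp : 2 < p) :
    ∃ t ∈ Ioo (0 : ℝ) (1 / 2), gp p t = 0 := by
  have hhalf : 0 < gp p (1 / 2) := by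
    rw [gp_half p]
    exact mul_pos (by linarith) (Real.rpow_pos_of_pos (by norm_num) _)
  exact intermediate_value_Ioo (by norm_num) (continuous_gp hp.le).continuousOn
    ⟨by rw [gp_zero hp]; norm_num, hhalf⟩

theorem isMinOn_fp {p tp : ℝ} (hp : 2 < p) (htp : tp ∈ Ioo (0 : ℝ) (1 / 2))
    (hzero : gp p tp = 0) : IsMinOn (fp p) (Icc 0 (1 / 2)) tp := by
  have hderiv (t : ℝ) := hasDerivAt_fp hp.le t
  have hdiff : Differentiable ℝ (fp p) := fun t => (hderiv t).differentiableAt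
  have hcont (t : ℝ) : ContinuousAt (fp p) t := hdiff.continuous.continuousAt
  have hmono := strictMonoOn_gp hp
  have htp' : tp ∈ Icc (0 : ℝ) (1 / 2) := Ioo_subset_Icc_self htp
  refine isMinOn_Icc_of_deriv (hcont 0) (hcont tp) (hcont (1 / 2))
    hdiff.differentiableOn hdiff.differentiableOn
    (fun t ht => ?_) (fun t ht => ?_) <;> rw [(hderiv t).deriv]
  · have : gp p t < gp p tp := hmono ⟨ht.1.le, by linarith [ht.2, htp.2]⟩ htp' ht.2
    nlinarith
  · have : gp p tp < gp p t := hmono htp' ⟨by linarith [ht.1, htp.1], ht.2.le⟩ ht.1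
    nlinarith

/-- Lemma 2, first part: for real `p > 2`, the function
`f_p(t) = p t^(p-1) + (1-t)^p - t^p` has a unique critical point `t_p` in `(0, 1/2)`,
and `f_p(t_p)` is the minimum value of `f_p` on `[0, 1/2]`. -/
theorem stmt9 (p : ℝ) (hp : 2 < p) :
    ∃ tp ∈ Set.Ioo (0 : ℝ) (1 / 2),
      deriv (fun t : ℝ => p * t ^ (p - 1) + (1 - t) ^ p - t ^ p) tp = 0 ∧
      (∀ s ∈ Set.Ioo (0 : ℝ) (1 / 2),
        deriv (fun t : ℝ => p * t ^ (p - 1) + (1 - t) ^ p - t ^ p) s = 0 → s = tp) ∧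
      ∀ s ∈ Set.Icc (0 : ℝ) (1 / 2),
        p * tp ^ (p - 1) + (1 - tp) ^ p - tp ^ p ≤ p * s ^ (p - 1) + (1 - s) ^ p - s ^ p := by
  have hderiv (t : ℝ) : deriv (fp p) t = p * gp p t := (hasDerivAt_fp hp.le t).deriv
  obtain ⟨tp, htp, hzero⟩ := exists_mem_Ioo_gp_eq_zero hp
  refine ⟨tp, htp, ?_, fun s hs hcrit => ?_, fun s hs => isMinOn_fp hp htp hzero hs⟩
  · change deriv (fp p) tp = 0
    rw [hderiv, hzero, mul_zero]
  · change deriv (fp p) s = 0 at hcrit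
    rw [hderiv, mul_eq_zero, or_iff_right (by linarith)] at hcrit
    exact (strictMonoOn_gp hp).injOn (Ioo_subset_Icc_self hs) (Ioo_subset_Icc_self htp)
      (hcrit.trans hzero.symm)
end

section
/- Let p be a real number of the form p = 2i/(2j+1) with i, j positive integers and p > 2, and define F_p(t) = p·sgn(t)·|t|^{p-1} + |1-t|^p - |t|^p for all t ∈ ℝ. Then F_p(t) ≥ m_p for every t ∈ ℝ, where m_p is the minimum value of F_p on [0, 1/2]. -/
/-!
Off `[0, 1/2]` the sign and the absolute values in `F_p` resolve on each of the pieces `t ≤ 0`,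
`[1/2, 1]` and `t ≥ 1`, and `F_p` is monotone there: decreasing on the first piece and increasing
on the other two. Differentiating, the sign of the derivative comes down to the tangent-line
inequality for the convex function `x ↦ x ^ (p - 1)` on the outer pieces, and to
`(1 - x) ^ (p - 1) ≤ x ^ (p - 1)` for `x ≥ 1/2` on the middle one. Hence `F_p(t)` dominates
`F_p(0)` or `F_p(1/2)`.
-/

open Real Set

lemma rpow_tangent_line_le {q x y : ℝ} (hq : 1 ≤ q) (hx : 0 ≤ x) (hy : 0 ≤ y) :
    x ^ q + q * x ^ (q - 1) * (y - x) ≤ y ^ q := by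
  rcases hx.eq_or_lt with rfl | hx
  · rcases hq.eq_or_lt with rfl | hq
    · simp
    · simp [zero_rpow (by linarith : q ≠ 0), zero_rpow (by linarith : q - 1 ≠ 0),
        rpow_nonneg hy]
  · have hbern := one_add_mul_self_le_rpow_one_add
      (by linarith [div_nonneg hy hx.le] : -1 ≤ y / x - 1) hq
    rw [add_sub_cancel, div_rpow hy hx.le] at hbern
    have hxq := rpow_pos_of_pos hx q
    calc x ^ q + q * x ^ (q - 1) * (y - x) = x ^ q * (1 + q * (y / x - 1)) := by
          rw [rpow_sub_one hx.ne']; field_simp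
      _ ≤ x ^ q * (y ^ q / x ^ q) := by gcongr
      _ = y ^ q := by field_simp

lemma rpow_add_one_sub_rpow_le {q x : ℝ} (hq : 1 ≤ q) (hx : 1 / 2 ≤ x) (hx1 : x ≤ 1) :
    x ^ q + (1 - x) ^ q ≤ q * x ^ (q - 1) := by
  have hx0 : 0 < x := by linarith
  have hpow : (1 - x) ^ (q - 1) ≤ x ^ (q - 1) := by
    gcongr
    linarith
  have hsplit : ∀ y : ℝ, 0 ≤ y → y ^ q = y ^ (q - 1) * y := fun y hy => by
    rw [← rpow_add_one' hy (by linarith), sub_add_cancel]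
  rw [hsplit x hx0.le, hsplit (1 - x) (by linarith)]
  nlinarith [rpow_nonneg hx0.le (q - 1)]

lemma monotoneOn_of_hasDerivAt_nonneg {D : Set ℝ} (hD : Convex ℝ D) {f f' : ℝ → ℝ}
    (hf : ∀ x, HasDerivAt f (f' x) x) (hf' : ∀ x ∈ interior D, 0 ≤ f' x) : MonotoneOn f D :=
  monotoneOn_of_hasDerivWithinAt_nonneg hD (fun x _ => (hf x).continuousAt.continuousWithinAt)
    (fun x _ => (hf x).hasDerivWithinAt) hf'

noncomputable def Fp (p t : ℝ) : ℝ := p * Real.sign t * |t| ^ (p - 1) + |1 - t| ^ p - |t| ^ p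

section
variable {p t : ℝ}

lemma Fp_of_nonneg_of_le_one (hp : 1 < p) (ht : 0 ≤ t) (ht1 : t ≤ 1) :
    Fp p t = p * t ^ (p - 1) + (1 - t) ^ p - t ^ p := by
  rcases ht.eq_or_lt with rfl | ht
  · simp [Fp, zero_rpow (by linarith : p - 1 ≠ 0)]
  · simp [Fp, abs_of_pos ht, abs_of_nonneg (by linarith : 0 ≤ 1 - t), Real.sign_of_pos ht]

lemma Fp_of_nonpos (hp : 1 < p) (ht : t ≤ 0) :
    Fp p t = (1 + -t) ^ p - (-t) ^ p - p * (-t) ^ (p - 1) := by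
  rcases ht.eq_or_lt with rfl | ht
  · simp [Fp, zero_rpow (by linarith : p - 1 ≠ 0)]
  · simp only [Fp, Real.sign_of_neg ht, abs_of_neg ht, abs_of_nonneg (by linarith : 0 ≤ 1 - t)]
    rw [← sub_eq_add_neg]
    ring

lemma Fp_of_one_le (ht : 1 ≤ t) : Fp p t = p * t ^ (p - 1) + (t - 1) ^ p - t ^ p := by
  simp [Fp, abs_of_pos (by linarith : 0 < t), abs_of_nonpos (by linarith : 1 - t ≤ 0),
    Real.sign_of_pos (by linarith : 0 < t)]

lemma Fp_nonneg (hp : 1 < p) (ht : 0 ≤ t) (ht1 : t ≤ 1 / 2) : 0 ≤ Fp p t := by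
  rw [Fp_of_nonneg_of_le_one hp ht (by linarith)]
  have hpow : t ^ p ≤ (1 - t) ^ p := by gcongr; linarith
  nlinarith [rpow_nonneg ht (p - 1)]

lemma Fp_zero_le_of_nonpos (hp : 2 ≤ p) (ht : t ≤ 0) : Fp p 0 ≤ Fp p t := by
  have hmono : MonotoneOn (fun s : ℝ => (1 + s) ^ p - s ^ p - p * s ^ (p - 1)) (Ici 0) := by
    refine monotoneOn_of_hasDerivAt_nonneg (convex_Ici 0)
      (f' := fun x => p * ((1 + x) ^ (p - 1) - (x ^ (p - 1) + (p - 1) * x ^ (p - 1 - 1))))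
      (fun x => ?_) (fun x hx => ?_)
    · have hid := hasDerivAt_id' x
      refine ((((hid.const_add 1).rpow_const (p := p) (Or.inr (by linarith))).sub
        (hid.rpow_const (p := p) (Or.inr (by linarith)))).sub
        ((hid.rpow_const (p := p - 1) (Or.inr (by linarith))).const_mul p)).congr_deriv ?_
      ring
    · rw [interior_Ici, mem_Ioi] at hx
      have htangent := rpow_tangent_line_le (q := p - 1) (y := 1 + x) (by linarith) hx.le
        (by linarith)
      rw [add_sub_cancel_right, mul_one] at htangent
      exact mul_nonneg (by linarith) (sub_nonneg.2 htangent)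
  rw [Fp_of_nonpos (by linarith) le_rfl, Fp_of_nonpos (by linarith) ht, neg_zero]
  exact hmono (mem_Ici.2 le_rfl) (neg_nonneg.2 ht) (neg_nonneg.2 ht)

lemma Fp_half_le_of_le_one (hp : 2 ≤ p) (ht : 1 / 2 ≤ t) (ht1 : t ≤ 1) :
    Fp p (1 / 2) ≤ Fp p t := by
  have hmono :
      MonotoneOn (fun s : ℝ => p * s ^ (p - 1) + (1 - s) ^ p - s ^ p) (Icc (1 / 2) 1) := by
    refine monotoneOn_of_hasDerivAt_nonneg (convex_Icc _ _)
      (f' := fun x => p * ((p - 1) * x ^ (p - 1 - 1) - (x ^ (p - 1) + (1 - x) ^ (p - 1))))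
      (fun x => ?_) (fun x hx => ?_)
    · have hid := hasDerivAt_id' x
      refine ((((hid.rpow_const (p := p - 1) (Or.inr (by linarith))).const_mul p).add
        ((hid.const_sub 1).rpow_const (p := p) (Or.inr (by linarith)))).sub
        (hid.rpow_const (p := p) (Or.inr (by linarith)))).congr_deriv ?_
      ring
    · rw [interior_Icc] at hx
      have hsum := rpow_add_one_sub_rpow_le (q := p - 1) (by linarith) hx.1.le hx.2.le
      exact mul_nonneg (by linarith) (sub_nonneg.2 hsum)
  rw [Fp_of_nonneg_of_le_one (by linarith) (by norm_num) (by norm_num),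
    Fp_of_nonneg_of_le_one (by linarith) (by linarith) ht1]
  exact hmono (left_mem_Icc.2 (by norm_num)) ⟨ht, ht1⟩ ht

lemma Fp_one_le_of_one_le (hp : 2 ≤ p) (ht : 1 ≤ t) : Fp p 1 ≤ Fp p t := by
  have hmono : MonotoneOn (fun s : ℝ => p * s ^ (p - 1) + (s - 1) ^ p - s ^ p) (Ici 1) := by
    refine monotoneOn_of_hasDerivAt_nonneg (convex_Ici 1)
      (f' := fun x => p * ((p - 1) * x ^ (p - 1 - 1) + (x - 1) ^ (p - 1) - x ^ (p - 1)))
      (fun x => ?_) (fun x hx => ?_)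
    · have hid := hasDerivAt_id' x
      refine ((((hid.rpow_const (p := p - 1) (Or.inr (by linarith))).const_mul p).add
        ((hid.sub_const 1).rpow_const (p := p) (Or.inr (by linarith)))).sub
        (hid.rpow_const (p := p) (Or.inr (by linarith)))).congr_deriv ?_
      ring
    · rw [interior_Ici, mem_Ioi] at hx
      have htangent := rpow_tangent_line_le (q := p - 1) (y := x - 1) (by linarith)
        (by linarith) (by linarith)
      rw [sub_sub_cancel_left] at htangent
      exact mul_nonneg (by linarith) (by linarith)
  rw [Fp_of_one_le le_rfl, Fp_of_one_le ht]
  exact hmono (mem_Ici.2 le_rfl) ht ht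

lemma Fp_half_le (hp : 2 ≤ p) (ht : 1 / 2 ≤ t) : Fp p (1 / 2) ≤ Fp p t := by
  rcases le_total t 1 with ht1 | ht1
  · exact Fp_half_le_of_le_one hp ht ht1
  · exact (Fp_half_le_of_le_one hp (by norm_num) le_rfl).trans (Fp_one_le_of_one_le hp ht1)

end

theorem stmt11_general (p : ℝ) (hp2 : 2 < p) (t : ℝ) :
    sInf ((fun t : ℝ => p * Real.sign t * |t| ^ (p - 1) + |1 - t| ^ p - |t| ^ p) ''
        Set.Icc 0 (1 / 2))
      ≤ p * Real.sign t * |t| ^ (p - 1) + |1 - t| ^ p - |t| ^ p := by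
  change sInf (Fp p '' Icc 0 (1 / 2)) ≤ Fp p t
  have hbdd : BddBelow (Fp p '' Icc 0 (1 / 2)) :=
    ⟨0, forall_mem_image.2 fun s hs => Fp_nonneg (by linarith) hs.1 hs.2⟩
  have hinf_le : ∀ s ∈ Icc (0 : ℝ) (1 / 2), sInf (Fp p '' Icc 0 (1 / 2)) ≤ Fp p s :=
    fun s hs => csInf_le hbdd (mem_image_of_mem _ hs)
  rcases le_or_gt t 0 with ht | ht
  · exact (hinf_le 0 (left_mem_Icc.2 (by norm_num))).trans (Fp_zero_le_of_nonpos hp2.le ht)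
  rcases le_or_gt t (1 / 2) with ht' | ht'
  · exact hinf_le t ⟨ht.le, ht'⟩
  · exact (hinf_le _ (right_mem_Icc.2 (by norm_num))).trans (Fp_half_le hp2.le ht'.le)

/-- Lemma 2, last part: for `p = 2i/(2j+1) > 2`, the extension
`F_p(t) = p sgn(t) |t|^(p-1) + |1-t|^p - |t|^p` of `f_p` to all of `ℝ` satisfies
`F_p(t) ≥ m_p` for every real `t`, where `m_p` is the minimum value of `F_p` (equivalently,
of `f_p`) on `[0, 1/2]`. -/
theorem stmt11 (p : ℝ) (i j : ℕ) (hi : 0 < i) (hj : 0 < j)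
    (hp : p = 2 * (i : ℝ) / (2 * (j : ℝ) + 1)) (hp2 : 2 < p) (t : ℝ) :
    sInf ((fun t : ℝ => p * Real.sign t * |t| ^ (p - 1) + |1 - t| ^ p - |t| ^ p) ''
        Set.Icc 0 (1 / 2))
      ≤ p * Real.sign t * |t| ^ (p - 1) + |1 - t| ^ p - |t| ^ p :=
  stmt11_general p hp2 t
end

section
/- Let p > 1 and r > 2 be real numbers with pr > 1. Define x on (0, ∞) by x(s) = -1 for 0 < s < 1 and x(s) = (r-1)·s^{-r} for s > 1, and set y(s) = (1/s)·∫_0^s x. Then y(s) = -1 for 0 < s < 1 and y(s) = -s^{-r} for s > 1; consequently ∫_0^∞ |x|^p = 1 + (r-1)^p/(pr-1) and ∫_0^∞ |y - x|^p = r^p/(pr-1). -/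
/-!
On `(0,1)` the function `x` is constant, so its running average is `-1` there. Beyond `1`,
`∫_1^s (r-1) θ^{-r} dθ = 1 - s^{1-r}` cancels the contribution `-1` of `(0,1)`, so
`∫_0^s x = -s^{1-r}` and `y(s) = -s^{-r}`. Both `|x|^p` and `|y - x|^p` are then constant on
`(0,1)` and of the form `|c|^p s^{-pr}` on `(1,∞)`, and `∫_1^∞ s^{-pr} ds = 1/(pr-1)`.
-/

open MeasureTheory Set

theorem intervalIntegral_eq_sub_mul_of_eqOn_Ioo {f : ℝ → ℝ} {a b c : ℝ} (hab : a ≤ b)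
    (h : EqOn f (fun _ => c) (Ioo a b)) : ∫ θ in a..b, f θ = (b - a) * c := by
  rw [intervalIntegral.integral_congr_uIoo (by rwa [uIoo_of_le hab]),
    intervalIntegral.integral_const, smul_eq_mul]

theorem intervalIntegral_sub_one_mul_rpow_neg {r s : ℝ} (hr : r ≠ 1) (hs : 0 < s) :
    ∫ θ in (1 : ℝ)..s, (r - 1) * θ ^ (-r) = 1 - s ^ (1 - r) := by
  have h0 : (0 : ℝ) ∉ uIcc 1 s := notMem_uIcc_of_lt zero_lt_one hs
  have hr' : -r ≠ -1 := fun h => hr (neg_inj.1 h)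
  have hsub : (1 : ℝ) - r ≠ 0 := sub_ne_zero.2 (Ne.symm hr)
  rw [intervalIntegral.integral_const_mul, integral_rpow (Or.inr ⟨hr', h0⟩), Real.one_rpow,
    show -r + 1 = 1 - r by ring]
  field_simp
  ring

theorem intervalIntegral_zero_eq_neg_rpow_of_eqOn {x : ℝ → ℝ} {r s : ℝ} (hr : 1 < r)
    (hs : 1 ≤ s) (hx₀ : EqOn x (fun _ => -1) (Ioo 0 1))
    (hx₁ : EqOn x (fun θ => (r - 1) * θ ^ (-r)) (Ici 1)) :
    ∫ θ in (0 : ℝ)..s, x θ = -s ^ (1 - r) := by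
  have hx₁' : EqOn x (fun θ => (r - 1) * θ ^ (-r)) (uIoo 1 s) := by
    rw [uIoo_of_le hs]; exact hx₁.mono fun θ hθ => le_of_lt hθ.1
  have hint₀ : IntervalIntegrable x volume 0 1 :=
    intervalIntegrable_const.congr_uIoo (by rw [uIoo_of_le zero_le_one]; exact hx₀.symm)
  have hcont : ContinuousOn (fun θ : ℝ => (r - 1) * θ ^ (-r)) (uIcc 1 s) := by
    rw [uIcc_of_le hs]
    exact continuousOn_const.mul
      (continuousOn_id.rpow_const fun θ hθ => Or.inl (zero_lt_one.trans_le hθ.1).ne')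
  have hint₁ : IntervalIntegrable x volume 1 s := hcont.intervalIntegrable.congr_uIoo hx₁'.symm
  rw [← intervalIntegral.integral_add_adjacent_intervals hint₀ hint₁,
    intervalIntegral_eq_sub_mul_of_eqOn_Ioo zero_le_one hx₀,
    intervalIntegral.integral_congr_uIoo hx₁',
    intervalIntegral_sub_one_mul_rpow_neg hr.ne' (by linarith)]
  ring

theorem abs_mul_rpow_neg_rpow {c r p s : ℝ} (hs : 0 < s) :
    |c * s ^ (-r)| ^ p = |c| ^ p * s ^ (-(p * r)) := by
  rw [abs_mul, abs_of_nonneg (Real.rpow_nonneg hs.le _),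
    Real.mul_rpow (abs_nonneg c) (Real.rpow_nonneg hs.le _), ← Real.rpow_mul hs.le, neg_mul,
    mul_comm r]

theorem integral_Ioi_zero_eq_add_of_eqOn {g : ℝ → ℝ} {a c p r : ℝ} (hpr : 1 < p * r)
    (h₀ : EqOn g (fun _ => a) (Ioo 0 1)) (h₁ : EqOn g (fun s => |c * s ^ (-r)| ^ p) (Ioi 1)) :
    ∫ s in Ioi 0, g s = a + |c| ^ p / (p * r - 1) := by
  have h₁' : EqOn g (fun s => |c| ^ p * s ^ (-(p * r))) (Ioi 1) := fun s hs => by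
    rw [h₁ hs]; exact abs_mul_rpow_neg_rpow (zero_lt_one.trans hs)
  have hlt : -(p * r) < -1 := by linarith
  have hint₀ : IntegrableOn g (Ioo 0 1) := (integrableOn_const (by simp) (by simp)).congr_fun
    h₀.symm measurableSet_Ioo
  have hint₁ : IntegrableOn g (Ioi 1) :=
    IntegrableOn.congr_fun ((integrableOn_Ioi_rpow_of_lt hlt zero_lt_one).const_mul _) h₁'.symm
      measurableSet_Ioi
  have hdisj : Disjoint (Ioo (0 : ℝ) 1) (Ici 1) := disjoint_left.2 fun _ h h' => not_le.2 h.2 h'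
  rw [← Ioo_union_Ici_eq_Ioi zero_lt_one, setIntegral_union hdisj
      measurableSet_Ici hint₀ ((integrableOn_Ici_iff_integrableOn_Ioi (f := g)).2 hint₁),
    integral_Ici_eq_integral_Ioi, setIntegral_congr_fun measurableSet_Ioo h₀,
    setIntegral_congr_fun measurableSet_Ioi h₁', setIntegral_const, integral_const_mul,
    integral_Ioi_rpow_of_lt hlt zero_lt_one, Real.one_rpow]
  simp only [Real.volume_real_Ioo_of_le zero_le_one, smul_eq_mul]
  rw [show -(p * r) + 1 = -(p * r - 1) by ring, neg_div_neg_eq]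
  ring

/-- The extremal example in the continuous case: for `p > 1`, `r > 2` with `pr > 1`, the
function `x` equal to `-1` on `(0,1)` and to `(r-1) s^{-r}` on `(1,∞)` has Hardy average
`y = Px` equal to `-1` on `(0,1)` and to `-s^{-r}` on `(1,∞)`, with
`∫_0^∞ |x|^p = 1 + (r-1)^p/(pr-1)` and `∫_0^∞ |y - x|^p = r^p/(pr-1)`. -/
theorem stmt16 (p r : ℝ) (hp : 1 < p) (hr : 2 < r) (hpr : 1 < p * r)
    (x : ℝ → ℝ) (hx : ∀ s : ℝ, 0 < s → x s = if s < 1 then -1 else (r - 1) * s ^ (-r))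
    (y : ℝ → ℝ) (hy : ∀ s : ℝ, 0 < s → y s = (1 / s) * ∫ θ in (0 : ℝ)..s, x θ) :
    (∀ s : ℝ, 0 < s → s < 1 → y s = -1) ∧
    (∀ s : ℝ, 1 < s → y s = -s ^ (-r)) ∧
    (∫ s in Set.Ioi (0 : ℝ), |x s| ^ p = 1 + (r - 1) ^ p / (p * r - 1)) ∧
    (∫ s in Set.Ioi (0 : ℝ), |y s - x s| ^ p = r ^ p / (p * r - 1)) := by
  have hx₀ : EqOn x (fun _ => -1) (Ioo 0 1) := fun s hs => by rw [hx s hs.1, if_pos hs.2]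
  have hx₁ : EqOn x (fun s => (r - 1) * s ^ (-r)) (Ici 1) := fun s (hs : 1 ≤ s) => by
    rw [hx s (by linarith), if_neg (not_lt.2 hs)]
  have hy₀ : ∀ s : ℝ, 0 < s → s < 1 → y s = -1 := fun s hs hs1 => by
    rw [hy s hs, intervalIntegral_eq_sub_mul_of_eqOn_Ioo hs.le
      (hx₀.mono (Ioo_subset_Ioo_right hs1.le))]
    field_simp
    ring
  have hy₁ : ∀ s : ℝ, 1 < s → y s = -s ^ (-r) := fun s hs => by
    have hs0 : 0 < s := by linarith
    rw [hy s hs0, intervalIntegral_zero_eq_neg_rpow_of_eqOn (by linarith) hs.le hx₀ hx₁,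
      sub_eq_add_neg, Real.rpow_add hs0, Real.rpow_one]
    field_simp
  refine ⟨hy₀, hy₁, ?_, ?_⟩
  · rw [integral_Ioi_zero_eq_add_of_eqOn hpr (a := 1) (c := r - 1)
      (fun s hs => by simp [hx₀ hs]) (fun s (hs : 1 < s) => by simp only [hx₁ hs.le]),
      abs_of_pos (by linarith : 0 < r - 1)]
  · rw [integral_Ioi_zero_eq_add_of_eqOn hpr (a := 0) (c := -r)
      (fun s hs => by simp [hy₀ s hs.1 hs.2, hx₀ hs, Real.zero_rpow (by linarith : p ≠ 0)])
      (fun s (hs : 1 < s) => by simp only [hy₁ s hs, hx₁ hs.le]; ring_nf),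
      abs_neg, abs_of_pos (by linarith : 0 < r), zero_add]
end

section
/- Let p ≥ 2 and r > 2 be real numbers. Then for every ε > 0 there exists a real sequence (x_n)_{n≥1} with 0 < ∑_{n=1}^∞ |x_n|^p < ∞ such that, with y_n = (1/n)·∑_{k=1}^n x_k, one has ∑_{n=1}^∞ |y_n - x_n|^p ≥ (r^p/((pr-1) + (r-1)^p) - ε) · ∑_{n=1}^∞ |x_n|^p. (Such sequences are given by x_n = -m^{-r} for n ≤ m and x_n = (n-1)^{1-r} - n^{1-r} for n > m, as m → ∞.) -/
open Real Finset Filter Topology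

/-!
For `m ≥ 1` take `x_k = -m^{-r}` for `k ≤ m` and `x_k = (k-1)^{1-r} - k^{1-r}` for `k > m`.
The partial sums are `-k m^{-r}` up to `m` and then telescope to `-k^{1-r}`, so `y_n = x_n`
for `n ≤ m` and `y_n = -n^{-r}` afterwards. Bernoulli's inequality traps
`a^{1-t} - (a+1)^{1-t}` between `(t-1)(a+1)^{-t}` and `(t-1)a^{-t}`. With `s = pr` this gives
`∑ |y_n - x_n|^p ≥ r^p (m+1)^{1-s}/(s-1)` and
`∑ |x_n|^p ≤ m^{1-s} + (r-1)^p (m^{-s} + m^{1-s}/(s-1))` (comparing the tails with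
telescoping sums), and the ratio of the two bounds tends to `r^p/((s-1) + (r-1)^p)`.
-/

namespace Real

theorem rpow_one_sub_eq_mul_rpow_neg {x : ℝ} (hx : 0 < x) (t : ℝ) :
    x ^ (1 - t) = x * x ^ (-t) := by
  rw [sub_eq_add_neg, rpow_add hx, rpow_one]

/-- The tangent-line inequality `b^t ≥ a^t + t a^{t-1} (b - a)`, divided by `a^{t-1} b^t`. -/
theorem rpow_neg_mul_le_rpow_one_sub {t a b : ℝ} (ht : 1 ≤ t) (ha : 0 < a) (hb : 0 < b) :
    b ^ (-t) * (a + t * (b - a)) ≤ a ^ (1 - t) := by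
  have h := one_add_mul_self_le_rpow_one_add (s := b / a - 1)
    (by have := div_pos hb ha; linarith) ht
  rw [add_sub_cancel, div_rpow hb.le ha.le] at h
  calc b ^ (-t) * (a + t * (b - a)) = a * b ^ (-t) * (1 + t * (b / a - 1)) := by
        field_simp
    _ ≤ a * b ^ (-t) * (b ^ t / a ^ t) := by gcongr
    _ = a ^ (1 - t) := by
        rw [rpow_neg hb.le, rpow_sub ha, rpow_one]
        field_simp

theorem sub_one_mul_rpow_neg_le_rpow_one_sub_sub {t a : ℝ} (ht : 1 ≤ t) (ha : 0 < a) :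
    (t - 1) * (a + 1) ^ (-t) ≤ a ^ (1 - t) - (a + 1) ^ (1 - t) := by
  have h := rpow_neg_mul_le_rpow_one_sub ht ha (b := a + 1) (by linarith)
  rw [rpow_one_sub_eq_mul_rpow_neg (by linarith : 0 < a + 1)]
  linarith

theorem rpow_one_sub_sub_le_sub_one_mul_rpow_neg {t a : ℝ} (ht : 1 ≤ t) (ha : 0 < a) :
    a ^ (1 - t) - (a + 1) ^ (1 - t) ≤ (t - 1) * a ^ (-t) := by
  have h := rpow_neg_mul_le_rpow_one_sub ht (a := a + 1) (by linarith) ha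
  rw [rpow_one_sub_eq_mul_rpow_neg ha]
  linarith

theorem mul_rpow_neg_rpow {K a : ℝ} (hK : 0 ≤ K) (ha : 0 ≤ a) (r p : ℝ) :
    (K * a ^ (-r)) ^ p = K ^ p * a ^ (-(p * r)) := by
  rw [mul_rpow hK (rpow_nonneg ha _), ← rpow_mul ha, neg_mul, mul_comm r]

section TailSums

variable {s c : ℝ}

theorem sum_range_add_rpow_one_sub_sub (c s : ℝ) (N : ℕ) :
    ∑ n ∈ range N, ((c + n) ^ (1 - s) - (c + n + 1) ^ (1 - s)) =
      c ^ (1 - s) - (c + N) ^ (1 - s) := by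
  simpa [add_assoc] using sum_range_sub' (fun n : ℕ => (c + n) ^ (1 - s)) N

theorem sub_one_mul_sum_range_add_rpow_neg_le (hs : 1 ≤ s) (hc : 0 < c) (N : ℕ) :
    (s - 1) * ∑ n ∈ range N, (c + n + 1) ^ (-s) ≤ c ^ (1 - s) := by
  calc (s - 1) * ∑ n ∈ range N, (c + n + 1) ^ (-s)
      ≤ ∑ n ∈ range N, ((c + n) ^ (1 - s) - (c + n + 1) ^ (1 - s)) := by
        rw [mul_sum]
        exact sum_le_sum fun n _ ↦ sub_one_mul_rpow_neg_le_rpow_one_sub_sub hs (by positivity)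
    _ = c ^ (1 - s) - (c + N) ^ (1 - s) := sum_range_add_rpow_one_sub_sub c s N
    _ ≤ c ^ (1 - s) := sub_le_self _ (by positivity)

theorem summable_add_rpow_neg (hs : 1 < s) (hc : 0 < c) :
    Summable fun n : ℕ ↦ (c + n) ^ (-s) := by
  rw [← summable_nat_add_iff 1]
  refine summable_of_sum_range_le (c := c ^ (1 - s) / (s - 1)) (fun n ↦ by positivity)
    fun N ↦ ?_
  rw [le_div_iff₀' (by linarith)]
  simpa [add_assoc] using sub_one_mul_sum_range_add_rpow_neg_le hs.le hc N

theorem tsum_add_rpow_neg_le (hs : 1 < s) (hc : 0 < c) :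
    ∑' n : ℕ, (c + n) ^ (-s) ≤ c ^ (-s) + c ^ (1 - s) / (s - 1) := by
  rw [(summable_add_rpow_neg hs hc).tsum_eq_zero_add]
  simp only [Nat.cast_zero, add_zero, Nat.cast_add, Nat.cast_one, ← add_assoc]
  gcongr
  refine Real.tsum_le_of_sum_range_le (fun n ↦ by positivity) fun N ↦ ?_
  rw [le_div_iff₀' (by linarith)]
  exact sub_one_mul_sum_range_add_rpow_neg_le hs.le hc N

theorem div_sub_one_le_tsum_add_rpow_neg (hs : 1 < s) (hc : 0 < c) :
    c ^ (1 - s) / (s - 1) ≤ ∑' n : ℕ, (c + n) ^ (-s) := by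
  have hlim : Tendsto (fun N : ℕ ↦ (c ^ (1 - s) - (c + N) ^ (1 - s)) / (s - 1)) atTop
      (𝓝 ((c ^ (1 - s) - 0) / (s - 1))) := by
    refine (tendsto_const_nhds.sub ?_).div_const _
    have := (tendsto_rpow_neg_atTop (y := s - 1) (by linarith)).comp
      (tendsto_atTop_add_const_left atTop c tendsto_natCast_atTop_atTop)
    simpa [Function.comp_def] using this
  rw [sub_zero] at hlim
  refine le_of_tendsto' hlim fun N ↦ ?_
  rw [div_le_iff₀' (by linarith), ← sum_range_add_rpow_one_sub_sub]
  calc ∑ n ∈ range N, ((c + n) ^ (1 - s) - (c + n + 1) ^ (1 - s))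
      ≤ ∑ n ∈ range N, (s - 1) * (c + n) ^ (-s) :=
        sum_le_sum fun n _ ↦ rpow_one_sub_sub_le_sub_one_mul_rpow_neg hs.le (by positivity)
    _ ≤ (s - 1) * ∑' n : ℕ, (c + n) ^ (-s) := by
        rw [← mul_sum]
        exact mul_le_mul_of_nonneg_left
          ((summable_add_rpow_neg hs hc).sum_le_tsum _ fun n _ ↦ by positivity) (by linarith)

end TailSums
end Real

section Comparison

variable {f : ℕ → ℝ} {K s : ℝ} {m : ℕ}

theorem summable_of_le_mul_rpow_neg (hs : 1 < s) (hf0 : ∀ n, 0 ≤ f n)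
    (hf : ∀ n, m ≤ n → f n ≤ K * (n : ℝ) ^ (-s)) : Summable f := by
  rw [← summable_nat_add_iff m]
  refine .of_nonneg_of_le (fun n ↦ hf0 _) (fun n ↦ hf _ (Nat.le_add_left m n)) ?_
  exact (summable_nat_add_iff m).2 ((summable_nat_rpow.2 (by linarith)).mul_left K)

theorem tsum_le_of_le_mul_rpow_neg (hs : 1 < s) (hK : 0 ≤ K) (hm : 0 < m)
    (hf0 : ∀ n, 0 ≤ f n) (hf : ∀ n, m ≤ n → f n ≤ K * (n : ℝ) ^ (-s)) :
    ∑' n, f n ≤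
      ∑ n ∈ range m, f n + K * ((m : ℝ) ^ (-s) + (m : ℝ) ^ (1 - s) / (s - 1)) := by
  have hm' : (0 : ℝ) < m := Nat.cast_pos.2 hm
  rw [← (summable_of_le_mul_rpow_neg hs hf0 hf).sum_add_tsum_nat_add m]
  gcongr
  calc ∑' n, f (n + m) ≤ ∑' n : ℕ, K * ((m : ℝ) + n) ^ (-s) := by
        refine (summable_of_le_mul_rpow_neg hs hf0 hf).comp_injective (add_left_injective m)
          |>.tsum_le_tsum (fun n ↦ ?_) ((Real.summable_add_rpow_neg hs hm').mul_left K)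
        simpa [add_comm] using hf (n + m) (Nat.le_add_left m n)
    _ ≤ K * ((m : ℝ) ^ (-s) + (m : ℝ) ^ (1 - s) / (s - 1)) := by
        rw [tsum_mul_left]
        exact mul_le_mul_of_nonneg_left (Real.tsum_add_rpow_neg_le hs hm') hK

theorem mul_div_sub_one_le_tsum (hs : 1 < s) (hK : 0 ≤ K) (hf0 : ∀ n, 0 ≤ f n)
    (hf_sum : Summable f) (hf : ∀ n, m ≤ n → K * ((n : ℝ) + 1) ^ (-s) ≤ f n) :
    K * ((m : ℝ) + 1) ^ (1 - s) / (s - 1) ≤ ∑' n, f n := by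
  rw [← hf_sum.sum_add_tsum_nat_add m, mul_div_assoc]
  calc K * (((m : ℝ) + 1) ^ (1 - s) / (s - 1)) ≤ K * ∑' n : ℕ, ((m : ℝ) + 1 + n) ^ (-s) :=
        mul_le_mul_of_nonneg_left (Real.div_sub_one_le_tsum_add_rpow_neg hs (by positivity)) hK
    _ ≤ ∑' n, f (n + m) := by
        rw [← tsum_mul_left]
        refine ((Real.summable_add_rpow_neg hs (by positivity)).mul_left K).tsum_le_tsum
          (fun n ↦ ?_) (hf_sum.comp_injective (add_left_injective m))
        simpa [add_right_comm _ (1 : ℝ), add_comm (n : ℝ)] using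
          hf (n + m) (Nat.le_add_left m n)
    _ ≤ ∑ n ∈ range m, f n + ∑' n, f (n + m) :=
        le_add_of_nonneg_left (sum_nonneg fun n _ ↦ hf0 n)

end Comparison

theorem tendsto_extremal_ratio {s A B : ℝ} (hs : 1 < s) (hB : 0 ≤ B) :
    Tendsto (fun m : ℕ ↦ A * ((m : ℝ) + 1) ^ (1 - s) / (s - 1) /
        (m * (m : ℝ) ^ (-s) + B * ((m : ℝ) ^ (-s) + (m : ℝ) ^ (1 - s) / (s - 1))))
      atTop (𝓝 (A / ((s - 1) + B))) := by
  have hs' : 0 < s - 1 := by linarith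
  have hinv : Tendsto (fun m : ℕ ↦ 1 / (m : ℝ)) atTop (𝓝 0) :=
    tendsto_one_div_atTop_nhds_zero_nat
  have hnum : Tendsto (fun m : ℕ ↦ A / (s - 1) * (1 + 1 / (m : ℝ)) ^ (1 - s)) atTop
      (𝓝 (A / (s - 1) * (1 + 0) ^ (1 - s))) :=
    ((hinv.const_add 1).rpow_const (Or.inl (by norm_num))).const_mul _
  have hden : Tendsto (fun m : ℕ ↦ 1 + B * (1 / (m : ℝ) + 1 / (s - 1))) atTop
      (𝓝 (1 + B * (0 + 1 / (s - 1)))) :=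
    ((hinv.add_const _).const_mul B).const_add 1
  have hlim := hnum.div hden (by positivity)
  rw [add_zero, one_rpow, mul_one, zero_add,
    show A / (s - 1) / (1 + B * (1 / (s - 1))) = A / ((s - 1) + B) by field_simp] at hlim
  refine hlim.congr' ((eventually_gt_atTop 0).mono fun m hm ↦ ?_)
  have hm' : (0 : ℝ) < m := Nat.cast_pos.2 hm
  have hpow : ((m : ℝ) + 1) ^ (1 - s) = (1 + 1 / (m : ℝ)) ^ (1 - s) * (m : ℝ) ^ (1 - s) := by
    rw [← mul_rpow (by positivity) hm'.le]
    field_simp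
  simp only [Pi.div_apply]
  rw [hpow, Real.rpow_one_sub_eq_mul_rpow_neg hm']
  have : (0 : ℝ) < (m : ℝ) ^ (-s) := rpow_pos_of_pos hm' _
  field_simp

noncomputable def cesaroMean (x : ℕ → ℝ) (n : ℕ) : ℝ :=
  1 / ((n : ℝ) + 1) * ∑ k ∈ range (n + 1), x (k + 1)

/-- Indexed as in the paper, `k ≥ 1`; the value at `k = 0` is never used. -/
noncomputable def extremalSeq (r : ℝ) (m k : ℕ) : ℝ :=
  if k ≤ m then -(m : ℝ) ^ (-r) else ((k : ℝ) - 1) ^ (1 - r) - (k : ℝ) ^ (1 - r)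

namespace extremalSeq

variable {r p : ℝ} {m n N : ℕ}

theorem succ_of_lt (h : n < m) : extremalSeq r m (n + 1) = -(m : ℝ) ^ (-r) :=
  if_pos h

theorem succ_of_le (h : m ≤ n) :
    extremalSeq r m (n + 1) = (n : ℝ) ^ (1 - r) - ((n : ℝ) + 1) ^ (1 - r) := by
  rw [extremalSeq, if_neg (by omega)]
  push_cast
  ring_nf

theorem sum_range_of_le (h : N ≤ m) :
    ∑ k ∈ range N, extremalSeq r m (k + 1) = -(N * (m : ℝ) ^ (-r)) := by
  rw [sum_congr rfl fun k hk ↦ succ_of_lt ((mem_range.1 hk).trans_le h)]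
  simp

theorem sum_range_of_ge (hm : 0 < m) (h : m ≤ N) :
    ∑ k ∈ range N, extremalSeq r m (k + 1) = -(N : ℝ) ^ (1 - r) := by
  induction N, h using Nat.le_induction with
  | base => rw [sum_range_of_le le_rfl, Real.rpow_one_sub_eq_mul_rpow_neg (Nat.cast_pos.2 hm)]
  | succ N hN ih =>
    rw [sum_range_succ, ih, succ_of_le hN]
    push_cast
    ring

theorem cesaroMean_of_le (hm : 0 < m) (h : m ≤ n) :
    cesaroMean (extremalSeq r m) n = -((n : ℝ) + 1) ^ (-r) := by
  rw [cesaroMean, sum_range_of_ge hm (by omega), Nat.cast_add_one,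
    Real.rpow_one_sub_eq_mul_rpow_neg (by positivity)]
  field_simp

theorem sub_one_mul_le_succ (hr : 1 ≤ r) (hm : 0 < m) (h : m ≤ n) :
    (r - 1) * ((n : ℝ) + 1) ^ (-r) ≤ extremalSeq r m (n + 1) := by
  rw [succ_of_le h]
  exact Real.sub_one_mul_rpow_neg_le_rpow_one_sub_sub hr (by norm_cast; omega)

theorem succ_le_sub_one_mul (hr : 1 ≤ r) (hm : 0 < m) (h : m ≤ n) :
    extremalSeq r m (n + 1) ≤ (r - 1) * (n : ℝ) ^ (-r) := by
  rw [succ_of_le h]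
  exact Real.rpow_one_sub_sub_le_sub_one_mul_rpow_neg hr (by norm_cast; omega)

theorem succ_nonneg (hr : 1 ≤ r) (hm : 0 < m) (h : m ≤ n) : 0 ≤ extremalSeq r m (n + 1) :=
  (mul_nonneg (by linarith) (by positivity)).trans (sub_one_mul_le_succ hr hm h)

theorem abs_cesaroMean_sub (hr : 1 ≤ r) (hm : 0 < m) (h : m ≤ n) :
    |cesaroMean (extremalSeq r m) n - extremalSeq r m (n + 1)| =
      ((n : ℝ) + 1) ^ (-r) + extremalSeq r m (n + 1) := by
  rw [cesaroMean_of_le hm h, ← neg_add', abs_neg,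
    abs_of_nonneg (add_nonneg (by positivity) (succ_nonneg hr hm h))]

theorem abs_succ_rpow_of_lt (h : n < m) (p : ℝ) :
    |extremalSeq r m (n + 1)| ^ p = (m : ℝ) ^ (-(p * r)) := by
  rw [succ_of_lt h, abs_neg, abs_of_nonneg (by positivity), ← one_mul ((m : ℝ) ^ (-r)),
    Real.mul_rpow_neg_rpow zero_le_one (Nat.cast_nonneg m), Real.one_rpow, one_mul]

theorem abs_succ_rpow_le (hr : 1 ≤ r) (hp : 0 ≤ p) (hm : 0 < m) (h : m ≤ n) :
    |extremalSeq r m (n + 1)| ^ p ≤ (r - 1) ^ p * (n : ℝ) ^ (-(p * r)) := by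
  rw [abs_of_nonneg (succ_nonneg hr hm h),
    ← Real.mul_rpow_neg_rpow (by linarith) (Nat.cast_nonneg n)]
  exact Real.rpow_le_rpow (succ_nonneg hr hm h) (succ_le_sub_one_mul hr hm h) hp

theorem abs_cesaroMean_sub_rpow_le (hr : 1 ≤ r) (hp : 0 ≤ p) (hm : 0 < m) (h : m ≤ n) :
    |cesaroMean (extremalSeq r m) n - extremalSeq r m (n + 1)| ^ p ≤
      r ^ p * (n : ℝ) ^ (-(p * r)) := by
  have hn : (0 : ℝ) < n := by norm_cast; omega
  rw [abs_cesaroMean_sub hr hm h, ← Real.mul_rpow_neg_rpow (by linarith) hn.le]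
  refine Real.rpow_le_rpow (add_nonneg (by positivity) (succ_nonneg hr hm h)) ?_ hp
  have := Real.rpow_le_rpow_of_nonpos hn (le_add_of_nonneg_right zero_le_one)
    (by linarith : -r ≤ 0)
  linarith [succ_le_sub_one_mul hr hm h]

theorem rpow_le_abs_cesaroMean_sub_rpow (hr : 1 ≤ r) (hp : 0 ≤ p) (hm : 0 < m) (h : m ≤ n) :
    r ^ p * ((n : ℝ) + 1) ^ (-(p * r)) ≤
      |cesaroMean (extremalSeq r m) n - extremalSeq r m (n + 1)| ^ p := by
  rw [abs_cesaroMean_sub hr hm h, ← Real.mul_rpow_neg_rpow (by linarith) (by positivity)]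
  refine Real.rpow_le_rpow (by positivity) ?_ hp
  linarith [sub_one_mul_le_succ hr hm h]

theorem summable_abs_succ_rpow (hr : 1 ≤ r) (hs : 1 < p * r) (hm : 0 < m) :
    Summable fun n ↦ |extremalSeq r m (n + 1)| ^ p :=
  summable_of_le_mul_rpow_neg hs (fun _ ↦ by positivity)
    fun _ ↦ abs_succ_rpow_le hr (by nlinarith) hm

theorem tsum_abs_succ_rpow_pos (hr : 1 ≤ r) (hs : 1 < p * r) (hm : 0 < m) :
    0 < ∑' n, |extremalSeq r m (n + 1)| ^ p := by
  refine (summable_abs_succ_rpow hr hs hm).tsum_pos (fun _ ↦ by positivity) 0 ?_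
  rw [abs_succ_rpow_of_lt hm]
  exact rpow_pos_of_pos (Nat.cast_pos.2 hm) _

theorem tsum_abs_succ_rpow_le (hr : 1 ≤ r) (hs : 1 < p * r) (hm : 0 < m) :
    ∑' n, |extremalSeq r m (n + 1)| ^ p ≤ m * (m : ℝ) ^ (-(p * r)) +
      (r - 1) ^ p * ((m : ℝ) ^ (-(p * r)) + (m : ℝ) ^ (1 - p * r) / (p * r - 1)) := by
  have h := tsum_le_of_le_mul_rpow_neg hs (by positivity) hm (fun _ ↦ by positivity)
    fun _ ↦ abs_succ_rpow_le hr (by nlinarith) hm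
  rwa [sum_congr rfl fun n hn ↦ abs_succ_rpow_of_lt (mem_range.1 hn) p, sum_const, card_range,
    nsmul_eq_mul] at h

theorem le_tsum_abs_cesaroMean_sub_rpow (hr : 1 ≤ r) (hs : 1 < p * r) (hm : 0 < m) :
    r ^ p * ((m : ℝ) + 1) ^ (1 - p * r) / (p * r - 1) ≤
      ∑' n, |cesaroMean (extremalSeq r m) n - extremalSeq r m (n + 1)| ^ p := by
  have hp : 0 ≤ p := by nlinarith
  refine mul_div_sub_one_le_tsum hs (by positivity) (fun _ ↦ by positivity) ?_
    fun _ ↦ rpow_le_abs_cesaroMean_sub_rpow hr hp hm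
  exact summable_of_le_mul_rpow_neg hs (fun _ ↦ by positivity)
    fun _ ↦ abs_cesaroMean_sub_rpow_le hr hp hm

end extremalSeq

/-- The extremal sequences in the discrete case: for `p ≥ 2`, `r > 2` and every `ε > 0`,
there is a real sequence `(x_n)_{n≥1}` with `0 < ∑ |x_n|^p < ∞` such that, with
`y_n = (1/n) ∑_{k=1}^n x_k`,
`∑ |y_n - x_n|^p ≥ (r^p/((pr-1) + (r-1)^p) - ε) ∑ |x_n|^p`. (Sequences are indexed so
that term `n` of the paper is `x (n+1)` here, `n : ℕ`.) -/
theorem stmt17 (p r : ℝ) (hp : 2 ≤ p) (hr : 2 < r) (ε : ℝ) (hε : 0 < ε) :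
    ∃ x : ℕ → ℝ,
      (Summable fun n : ℕ => |x (n + 1)| ^ p) ∧
      0 < ∑' n : ℕ, |x (n + 1)| ^ p ∧
      (r ^ p / ((p * r - 1) + (r - 1) ^ p) - ε) * ∑' n : ℕ, |x (n + 1)| ^ p ≤
        ∑' n : ℕ,
          |(1 / ((n : ℝ) + 1)) * (∑ k ∈ Finset.range (n + 1), x (k + 1)) - x (n + 1)| ^ p := by
  have hr1 : 1 ≤ r := by linarith
  have hs : 1 < p * r := by nlinarith
  have hlim := tendsto_extremal_ratio (A := r ^ p) (B := (r - 1) ^ p) hs (by positivity)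
  obtain ⟨m, hratio, hm⟩ :=
    ((hlim.eventually (lt_mem_nhds (sub_lt_self _ hε))).and (eventually_gt_atTop 0)).exists
  have hupper := extremalSeq.tsum_abs_succ_rpow_le hr1 hs hm
  have hlower := extremalSeq.le_tsum_abs_cesaroMean_sub_rpow hr1 hs hm
  have hdenom := extremalSeq.tsum_abs_succ_rpow_pos hr1 hs hm
  refine ⟨extremalSeq r m, extremalSeq.summable_abs_succ_rpow hr1 hs hm, hdenom, ?_⟩
  rcases le_or_gt 0 (r ^ p / ((p * r - 1) + (r - 1) ^ p) - ε) with hC | hC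
  · have hU := hdenom.trans_le hupper
    calc _ ≤ _ := mul_le_mul_of_nonneg_left hupper hC
      _ ≤ _ := ((lt_div_iff₀ hU).1 hratio).le
      _ ≤ _ := hlower
  · exact (mul_nonpos_of_nonpos_of_nonneg hC.le hdenom.le).trans
      (tsum_nonneg fun n ↦ by positivity)
end

section
/- The minimum value of the function f_3(t) = 3t^2 + (1-t)^3 - t^3 on the interval [0, 1/2] equals 2 - √2; consequently the operator norm of C - I on ℓ^3 equals (2 - √2)^{-1/3}, i.e., m_3 = 2 - √2. -/
noncomputable section
namespace Stmt18Aux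
open Real Filter Topology



local notation "s" => Real.sqrt 2

lemma hs2 : Real.sqrt 2 ^ 2 = 2 := Real.sq_sqrt (by norm_num)
lemma hs_nonneg : 0 ≤ Real.sqrt 2 := Real.sqrt_nonneg 2
lemma hs_gt1 : 1 < Real.sqrt 2 := by nlinarith [hs2, hs_nonneg]
lemma hs_lt2 : Real.sqrt 2 < 2 := by nlinarith [hs2, hs_nonneg]
lemma hm_pos : 0 < 2 - Real.sqrt 2 := by linarith [hs_lt2]

/-- tangent line inequality for `|t|^3` -/
lemma abs_cube_tangent (u v : ℝ) : |u|^3 + 3*(|u| * u)*(v-u) ≤ |v|^3 := by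
  rcases le_or_gt 0 u with hu | hu <;> rcases le_or_gt 0 v with hv | hv
  · rw [abs_of_nonneg hu, abs_of_nonneg hv]
    nlinarith [mul_nonneg (sq_nonneg (v-u)) (by linarith : (0:ℝ) ≤ v + 2*u)]
  · rw [abs_of_nonneg hu, abs_of_neg hv]
    nlinarith [pow_nonneg hu 3, mul_nonneg (mul_nonneg hu hu) (le_of_lt (neg_pos.2 hv)),
      pow_pos (neg_pos.2 hv) 3]
  · rw [abs_of_neg hu, abs_of_nonneg hv]
    nlinarith [pow_nonneg hv 3, mul_nonneg (sq_nonneg u) hv, pow_pos (neg_pos.2 hu) 3]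
  · rw [abs_of_neg hu, abs_of_neg hv]
    nlinarith [mul_nonneg (sq_nonneg (v-u)) (by linarith : (0:ℝ) ≤ -v + 2*(-u))]

lemma G_ineq_nonneg (b Z : ℝ) (hZ : 0 ≤ Z) :
    (2 - s)*|Z|^3 ≤ |b - Z|^3 + 3*(|b| * b)*Z - |b|^3 := by
  rw [abs_of_nonneg hZ]
  rcases le_or_gt 0 b with hb | hb
  · rcases le_or_gt b Z with hbZ | hbZ
    · rw [abs_of_nonneg hb, abs_of_nonpos (by linarith : b - Z ≤ 0)]
      have hfac : (-(b-Z))^3 + 3*(b*b)*Z - b^3 - (2-s)*Z^3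
          = 2*(b-(1-s/2)*Z)^2*((1+s)*Z-b) := by
        linear_combination (3/2*Z^3 - 3/2*b*Z^2 - Real.sqrt 2/2*Z^3) * hs2
      have h1 : 0 ≤ (1+s)*Z - b := by nlinarith [hs_nonneg]
      nlinarith [mul_nonneg (sq_nonneg (b-(1-s/2)*Z)) h1, hfac]
    · rw [abs_of_nonneg hb, abs_of_nonneg (by linarith : 0 ≤ b - Z)]
      nlinarith [hs_gt1, mul_nonneg (mul_nonneg hZ hZ) (by linarith : (0:ℝ) ≤ b - Z),
      mul_nonneg hs_nonneg (pow_nonneg hZ 3)]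
  · rw [abs_of_neg hb, abs_of_nonpos (by linarith : b - Z ≤ 0)]
    nlinarith [hs_gt1, pow_nonneg hZ 3, mul_nonneg (mul_nonneg hZ hZ) (le_of_lt (neg_pos.2 hb))]

lemma G_ineq (b Z : ℝ) : (2 - s)*|Z|^3 ≤ |b - Z|^3 + 3*(|b| * b)*Z - |b|^3 := by
  rcases le_or_gt 0 Z with hZ | hZ
  · exact G_ineq_nonneg b Z hZ
  · have h := G_ineq_nonneg (-b) (-Z) (by linarith)
    rw [abs_neg, show -b - -Z = -(b - Z) by ring, abs_neg, abs_neg] at h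
    nlinarith [h]

lemma part1 : IsLeast ((fun t : ℝ => 3 * t ^ 2 + (1 - t) ^ 3 - t ^ 3) '' Set.Icc 0 (1 / 2))
    (2 - Real.sqrt 2) := by
  constructor
  · refine ⟨1 - s/2, ⟨by nlinarith [hs_lt2], by nlinarith [hs_gt1]⟩, ?_⟩
    have h2 := hs2
    linear_combination (Real.sqrt 2/4) * h2
  · rintro v ⟨t, ⟨ht0, ht2⟩, rfl⟩
    show (2:ℝ) - s ≤ 3 * t ^ 2 + (1 - t) ^ 3 - t ^ 3
    have h1 : (0:ℝ) ≤ 1 + s - t := by nlinarith [hs_nonneg]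
    nlinarith [mul_nonneg (sq_nonneg (t-1+s/2)) h1, hs2]






/-- partial sums -/
def S (x : ℕ → ℝ) (j : ℕ) : ℝ := ∑ k ∈ Finset.range j, x (k + 1)

lemma key_step (x : ℕ → ℝ) (n : ℕ) :
    (2 - s) * |S x (n+1) / (n+1 : ℝ) - x (n+1)|^3 + ((n:ℝ)+1) * |S x (n+1) / ((n:ℝ)+1)|^3
      ≤ |x (n+1)|^3 + (n:ℝ) * |S x n / (n:ℝ)|^3 := by
  set a : ℝ := S x n / (n:ℝ) with ha
  set b : ℝ := S x (n+1) / ((n:ℝ)+1) with hb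
  set X : ℝ := x (n+1) with hX
  have hprev : (n:ℝ) * a = S x n := by
    rcases Nat.eq_zero_or_pos n with h | h
    · subst h; simp [S]
    · rw [ha]; field_simp
  have hcur : ((n:ℝ)+1) * b = S x n + X := by
    rw [hb]; rw [show S x (n+1) = S x n + X from Finset.sum_range_succ _ _]
    field_simp
  have hZ : b - X = (n:ℝ) * (a - b) := by
    have : X = ((n:ℝ)+1) * b - (n:ℝ) * a := by linarith [hprev, hcur]
    rw [this]; ring
  have hA := G_ineq b (b - X)
  rw [show b - (b - X) = X by ring] at hA
  have hB := abs_cube_tangent b a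
  have hBn := mul_le_mul_of_nonneg_left hB (Nat.cast_nonneg n : (0:ℝ) ≤ n)
  rw [mul_add] at hBn
  have h3 : (n:ℝ) * (3*(|b| * b)*(a-b)) = 3*(|b| * b)*(b - X) := by rw [hZ]; ring
  have hsplit : |S x (n+1) / ((n:ℝ)+1) - x (n+1)| = |b - X| := rfl
  rw [hsplit]
  linarith [hA, hBn, h3]

lemma sum_bound (x : ℕ → ℝ) (N : ℕ) :
    (2 - s) * ∑ n ∈ Finset.range N, |S x (n+1) / ((n:ℝ)+1) - x (n+1)|^3
      ≤ ∑ n ∈ Finset.range N, |x (n+1)|^3 := by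
  have tel : ∑ n ∈ Finset.range N,
      (((n:ℝ)) * |S x n / (n:ℝ)|^3 - ((n:ℝ)+1) * |S x (n+1) / ((n:ℝ)+1)|^3)
      = 0 - (N:ℝ) * |S x N / (N:ℝ)|^3 := by
    have h := Finset.sum_range_sub' (f := fun j : ℕ => (j:ℝ) * |S x j / (j:ℝ)|^3) N
    have e0 : ((0:ℕ):ℝ) * |S x 0 / ((0:ℕ):ℝ)|^3 = 0 := by simp
    rw [e0] at h
    convert h using 2 with n
    push_cast
    ring
  have hterm : ∀ n ∈ Finset.range N,
      (2 - s) * |S x (n+1) / ((n:ℝ)+1) - x (n+1)|^3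
        ≤ |x (n+1)|^3 + ((n:ℝ) * |S x n / (n:ℝ)|^3 - ((n:ℝ)+1) * |S x (n+1) / ((n:ℝ)+1)|^3) := by
    intro n _
    have := key_step x n
    linarith
  calc (2 - s) * ∑ n ∈ Finset.range N, |S x (n+1) / ((n:ℝ)+1) - x (n+1)|^3
      = ∑ n ∈ Finset.range N, (2 - s) * |S x (n+1) / ((n:ℝ)+1) - x (n+1)|^3 := by
        rw [Finset.mul_sum]
    _ ≤ ∑ n ∈ Finset.range N, (|x (n+1)|^3
          + ((n:ℝ) * |S x n / (n:ℝ)|^3 - ((n:ℝ)+1) * |S x (n+1) / ((n:ℝ)+1)|^3)) :=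
        Finset.sum_le_sum hterm
    _ = ∑ n ∈ Finset.range N, |x (n+1)|^3 + (0 - (N:ℝ) * |S x N / (N:ℝ)|^3) := by
        rw [Finset.sum_add_distrib, tel]
    _ ≤ ∑ n ∈ Finset.range N, |x (n+1)|^3 := by
        have : (0:ℝ) ≤ (N:ℝ) * |S x N / (N:ℝ)|^3 :=
          mul_nonneg (Nat.cast_nonneg N) (pow_nonneg (abs_nonneg _) 3)
        linarith

/-- Part 2 in ℕ-power form. -/
lemma upper (x : ℕ → ℝ) (hx : Summable fun n : ℕ => |x (n+1)|^3) :
    (Summable fun n : ℕ => |S x (n+1) / ((n:ℝ)+1) - x (n+1)|^3) ∧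
    ∑' n : ℕ, |S x (n+1) / ((n:ℝ)+1) - x (n+1)|^3
      ≤ (2 - s)⁻¹ * ∑' n : ℕ, |x (n+1)|^3 := by
  set T : ℝ := ∑' n : ℕ, |x (n+1)|^3 with hT
  have hnonnegX : ∀ n : ℕ, 0 ≤ |x (n+1)|^3 := fun n => pow_nonneg (abs_nonneg _) 3
  have hnonnegZ : ∀ n : ℕ, 0 ≤ |S x (n+1) / ((n:ℝ)+1) - x (n+1)|^3 :=
    fun n => pow_nonneg (abs_nonneg _) 3
  have hb : ∀ N, ∑ n ∈ Finset.range N, |S x (n+1) / ((n:ℝ)+1) - x (n+1)|^3 ≤ (2 - s)⁻¹ * T := by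
    intro N
    have h1 := sum_bound x N
    have h2 : ∑ n ∈ Finset.range N, |x (n+1)|^3 ≤ T := Summable.sum_le_tsum (Finset.range N) (fun i _ => hnonnegX i) hx
    have h3 : (2 - s) * ∑ n ∈ Finset.range N, |S x (n+1) / ((n:ℝ)+1) - x (n+1)|^3 ≤ T :=
      h1.trans h2
    have h4 := (le_div_iff₀' hm_pos).mpr h3
    rwa [div_eq_inv_mul] at h4
  have hsum := summable_of_sum_range_le hnonnegZ hb
  exact ⟨hsum, Summable.tsum_le_of_sum_range_le hsum hb⟩


open Real

lemma rpow_neg_anti {u v : ℝ} (hu : 0 < u) (huv : u ≤ v) {p : ℝ} (hp : 0 ≤ p) :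
    v^(-p) ≤ u^(-p) := by
  have hv : (0:ℝ) < v := lt_of_lt_of_le hu huv
  rw [Real.rpow_neg (le_of_lt hu), Real.rpow_neg (le_of_lt hv)]
  have h1 : u^p ≤ v^p := Real.rpow_le_rpow (le_of_lt hu) huv hp
  have h2 : (0:ℝ) < u^p := Real.rpow_pos_of_pos hu p
  exact inv_anti₀ h2 h1

lemma rpow_slope {p a b : ℝ} (hp : 1 < p) (ha : 0 < a) (hab : a < b) :
    (p-1)*(b-a)*b^(-p) ≤ a^(1-p) - b^(1-p) ∧ a^(1-p) - b^(1-p) ≤ (p-1)*(b-a)*a^(-p) := by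
  have hb : (0:ℝ) < b := lt_trans ha hab
  have hder : ∀ t ∈ Set.Ioo a b, HasDerivAt (fun t : ℝ => t^(1-p)) ((1-p)*t^(-p)) t := by
    intro t ht
    have ht0 : (0:ℝ) < t := lt_trans ha ht.1
    have := Real.hasDerivAt_rpow_const (x := t) (p := 1-p) (Or.inl (ne_of_gt ht0))
    convert this using 1
    rw [show (1:ℝ)-p-1 = -p by ring]
  have hcont : ContinuousOn (fun t : ℝ => t^(1-p)) (Set.Icc a b) := by
    intro t ht
    have ht0 : (0:ℝ) < t := lt_of_lt_of_le ha ht.1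
    exact (Real.continuousAt_rpow_const t (1-p) (Or.inl (ne_of_gt ht0))).continuousWithinAt
  obtain ⟨ξ, hξ, hslope⟩ := exists_hasDerivAt_eq_slope (fun t : ℝ => t^(1-p))
    (fun t => (1-p)*t^(-p)) hab hcont hder
  have hξ0 : (0:ℝ) < ξ := lt_trans ha hξ.1
  have heq : a^(1-p) - b^(1-p) = (p-1)*(b-a)*ξ^(-p) := by
    have hba : b - a ≠ 0 := ne_of_gt (by linarith)
    field_simp at hslope
    nlinarith [hslope]
  constructor
  · rw [heq]
    have := rpow_neg_anti hξ0 (le_of_lt hξ.2) (by linarith : (0:ℝ) ≤ p)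
    have hc : (0:ℝ) ≤ (p-1)*(b-a) := mul_nonneg (by linarith) (by linarith)
    exact mul_le_mul_of_nonneg_left this hc
  · rw [heq]
    have := rpow_neg_anti ha (le_of_lt hξ.1) (by linarith : (0:ℝ) ≤ p)
    have hc : (0:ℝ) ≤ (p-1)*(b-a) := mul_nonneg (by linarith) (by linarith)
    exact mul_le_mul_of_nonneg_left this hc

lemma tele_upper (p : ℝ) (hp : 1 < p) (K M : ℕ) (hK : 1 ≤ K) :
    ∑ i ∈ Finset.range M, (((K+1+i : ℕ)):ℝ)^(-p) ≤ (K:ℝ)^(1-p) / (p-1) := by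
  have hterm : ∀ i ∈ Finset.range M, (((K+1+i : ℕ)):ℝ)^(-p)
      ≤ ((K+i:ℕ):ℝ)^(1-p)/(p-1) - ((K+(i+1):ℕ):ℝ)^(1-p)/(p-1) := by
    intro i _
    have ha : (0:ℝ) < ((K+i:ℕ):ℝ) := by
      have : 1 ≤ K + i := le_trans hK (Nat.le_add_right K i)
      exact_mod_cast Nat.lt_of_lt_of_le Nat.zero_lt_one this
    have hab : ((K+i:ℕ):ℝ) < ((K+1+i:ℕ):ℝ) := by exact_mod_cast (by omega : K+i < K+1+i)
    have h := (rpow_slope hp ha hab).1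
    have hd : ((K+1+i:ℕ):ℝ) - ((K+i:ℕ):ℝ) = 1 := by push_cast; ring
    rw [hd, mul_one] at h
    have hcast : ((K+(i+1):ℕ):ℝ) = ((K+1+i:ℕ):ℝ) := by push_cast; ring
    rw [hcast]
    rw [div_sub_div_same, le_div_iff₀ (by linarith : (0:ℝ) < p - 1)]
    linarith [h]
  have htel := Finset.sum_range_sub' (f := fun i : ℕ => ((K+i:ℕ):ℝ)^(1-p)/(p-1)) M
  calc ∑ i ∈ Finset.range M, (((K+1+i : ℕ)):ℝ)^(-p)
      ≤ ∑ i ∈ Finset.range M, (((K+i:ℕ):ℝ)^(1-p)/(p-1) - ((K+(i+1):ℕ):ℝ)^(1-p)/(p-1)) :=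
        Finset.sum_le_sum hterm
    _ = ((K+0:ℕ):ℝ)^(1-p)/(p-1) - ((K+M:ℕ):ℝ)^(1-p)/(p-1) := htel
    _ ≤ (K:ℝ)^(1-p) / (p-1) := by
        have h1 : (0:ℝ) < ((K+M:ℕ):ℝ) ∨ True := Or.inr trivial
        have h2 : (0:ℝ) ≤ ((K+M:ℕ):ℝ)^(1-p)/(p-1) := by
          apply div_nonneg _ (by linarith)
          positivity
        simp only [Nat.add_zero]
        linarith

lemma tele_lower (p : ℝ) (hp : 1 < p) (K M : ℕ) (hK : 1 ≤ K) :
    ((K+1:ℕ):ℝ)^(1-p)/(p-1) - ((K+1+M:ℕ):ℝ)^(1-p)/(p-1)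
      ≤ ∑ i ∈ Finset.range M, (((K+1+i : ℕ)):ℝ)^(-p) := by
  have hterm : ∀ i ∈ Finset.range M,
      ((K+1+i:ℕ):ℝ)^(1-p)/(p-1) - ((K+1+(i+1):ℕ):ℝ)^(1-p)/(p-1)
        ≤ (((K+1+i : ℕ)):ℝ)^(-p) := by
    intro i _
    have ha : (0:ℝ) < ((K+1+i:ℕ):ℝ) := by positivity
    have hab : ((K+1+i:ℕ):ℝ) < ((K+1+(i+1):ℕ):ℝ) := by
      exact_mod_cast (by omega : K+1+i < K+1+(i+1))
    have h := (rpow_slope hp ha hab).2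
    have hd : ((K+1+(i+1):ℕ):ℝ) - ((K+1+i:ℕ):ℝ) = 1 := by push_cast; ring
    rw [hd, mul_one] at h
    rw [div_sub_div_same, div_le_iff₀ (by linarith : (0:ℝ) < p - 1)]
    linarith [h]
  have htel := Finset.sum_range_sub' (f := fun i : ℕ => ((K+1+i:ℕ):ℝ)^(1-p)/(p-1)) M
  calc ((K+1:ℕ):ℝ)^(1-p)/(p-1) - ((K+1+M:ℕ):ℝ)^(1-p)/(p-1)
      = ∑ i ∈ Finset.range M,
          (((K+1+i:ℕ):ℝ)^(1-p)/(p-1) - ((K+1+(i+1):ℕ):ℝ)^(1-p)/(p-1)) := by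
        rw [htel]
    _ ≤ ∑ i ∈ Finset.range M, (((K+1+i : ℕ)):ℝ)^(-p) := Finset.sum_le_sum hterm




local notation "β" => 2 + Real.sqrt 2


lemma hβ1 : (1:ℝ) < β := by linarith [hs_nonneg]
lemma hq1 : (1:ℝ) < 3*β := by linarith [hs_nonneg]

def X (K : ℕ) (j : ℕ) : ℝ :=
  if j ≤ K then 1 else (K:ℝ)^(β:ℝ) * ((j:ℝ)^(1-β) - ((j-1:ℕ):ℝ)^(1-β))

def SB (K : ℕ) (j : ℕ) : ℝ := ∑ k ∈ Finset.range j, X K (k + 1)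

lemma pow3_rpow (x e : ℝ) (hx : 0 ≤ x) : (x^(e:ℝ))^(3:ℕ) = x^(e*3) := by
  rw [← Real.rpow_natCast (x^(e:ℝ)) 3, ← Real.rpow_mul hx]
  norm_num

lemma hSB (K : ℕ) (hK : 1 ≤ K) (j : ℕ) :
    SB K j = if j ≤ K then (j:ℝ) else (K:ℝ)^(β:ℝ) * (j:ℝ)^(1-β) := by
  have hK0 : (0:ℝ) < (K:ℝ) := by exact_mod_cast hK
  induction j with
  | zero => simp [SB, Nat.zero_le]
  | succ j ih =>
    rw [SB, Finset.sum_range_succ, ← SB]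
    rcases le_or_gt (j+1) K with h1 | h1
    · have h2 : j ≤ K := le_trans (Nat.le_succ j) h1
      rw [ih, if_pos h2, if_pos h1, X, if_pos h1]
      push_cast; ring
    · rcases le_or_gt (j+1) (K+1) with h2 | h2
      · -- j = K
        have hjK : j = K := by omega
        subst hjK
        rw [ih, if_pos (le_refl j), if_neg (by omega), X, if_neg (by omega)]
        have hred : ((j+1-1:ℕ):ℝ) = (j:ℝ) := by norm_num
        rw [hred]
        have hcomb : (j:ℝ)^(β:ℝ) * (j:ℝ)^(1-β) = (j:ℝ) := by
          rw [← Real.rpow_add hK0]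
          norm_num
        push_cast
        push_cast at hcomb
        nlinarith [hcomb]
      · have h3 : ¬ (j ≤ K) := by omega
        rw [ih, if_neg h3, if_neg (by omega), X, if_neg (by omega)]
        have hred : ((j+1-1:ℕ):ℝ) = (j:ℝ) := by norm_num
        rw [hred]
        push_cast
        ring

lemma X_one (K : ℕ) (hK : 1 ≤ K) : X K 1 = 1 := by rw [X, if_pos hK]

/-- bound on `|X K (n+1)|^3` for `n ≥ K` -/
lemma termX_tail_bound (K : ℕ) (hK : 1 ≤ K) (n : ℕ) (hn : K ≤ n) :
    |X K (n+1)|^3 ≤ (1+s)^(3:ℕ) * ((K:ℝ)^(β:ℝ))^(3:ℕ) * ((n:ℝ))^(-(3*β)) := by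
  have hn1 : ¬ (n+1 ≤ K) := by omega
  have hnpos : (0:ℝ) < (n:ℝ) := by exact_mod_cast Nat.lt_of_lt_of_le Nat.zero_lt_one hK |>.trans_le hn
  have hab : (n:ℝ) < ((n+1:ℕ):ℝ) := by exact_mod_cast Nat.lt_succ_self n
  have hs := (rpow_slope hβ1 hnpos hab).2
  have hd : (((n+1:ℕ)):ℝ) - (n:ℝ) = 1 := by push_cast; ring
  rw [hd, mul_one] at hs
  have hred : ((n+1-1:ℕ):ℝ) = (n:ℝ) := by norm_num
  rw [X, if_neg hn1, hred]
  have hKpow : (0:ℝ) < (K:ℝ)^(β:ℝ) := Real.rpow_pos_of_pos (by exact_mod_cast hK) β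
  have habs : |(K:ℝ)^(β:ℝ) * (((n+1:ℕ):ℝ))^(1-β) - (K:ℝ)^(β:ℝ) * ((n:ℝ))^(1-β)|
      = (K:ℝ)^(β:ℝ) * ((n:ℝ)^(1-β) - (((n+1:ℕ):ℝ))^(1-β)) := by
    rw [abs_of_nonpos]
    · ring
    · have hlow := (rpow_slope hβ1 hnpos hab).1
      rw [hd, mul_one] at hlow
      have hpos : (0:ℝ) < (β - 1) * (((n+1:ℕ)):ℝ)^(-β) :=
        mul_pos (by linarith [hβ1]) (Real.rpow_pos_of_pos (by positivity) _)
      have hmono : (0:ℝ) ≤ ((n:ℝ))^(1-β) - (((n+1:ℕ)):ℝ)^(1-β) := by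
        have : (2+s-1) = β - 1 := by ring
        nlinarith [hlow, hpos]
      nlinarith [hKpow, hmono]
  have : |(K:ℝ)^(β:ℝ) * ((((n+1:ℕ)):ℝ)^(1-β) - ((n:ℝ))^(1-β))|
      = (K:ℝ)^(β:ℝ) * ((n:ℝ)^(1-β) - (((n+1:ℕ):ℝ))^(1-β)) := by
    rw [show (K:ℝ)^(β:ℝ) * ((((n+1:ℕ)):ℝ)^(1-β) - ((n:ℝ))^(1-β))
        = (K:ℝ)^(β:ℝ) * (((n+1:ℕ):ℝ))^(1-β) - (K:ℝ)^(β:ℝ) * ((n:ℝ))^(1-β) by ring, habs]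
  push_cast at this ⊢
  rw [this]
  have hb : (0:ℝ) ≤ (1+s) * ((n:ℝ))^(-β) := by
    apply mul_nonneg (by linarith [hs_nonneg])
    exact le_of_lt (Real.rpow_pos_of_pos hnpos _)
  have h1 : (K:ℝ)^(β:ℝ) * ((n:ℝ)^(1-β) - (((n:ℝ))+1)^(1-β)) ≤ (K:ℝ)^(β:ℝ) * ((1+s) * ((n:ℝ))^(-β)) := by
    apply mul_le_mul_of_nonneg_left _ (le_of_lt hKpow)
    push_cast at hs
    nlinarith [hs]
  have h0 : (0:ℝ) ≤ (K:ℝ)^(β:ℝ) * ((n:ℝ)^(1-β) - (((n:ℝ))+1)^(1-β)) := by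
    have hlow := (rpow_slope hβ1 hnpos hab).1
    rw [hd, mul_one] at hlow
    push_cast at hlow
    have hpos : (0:ℝ) < (2+s-1) * ((n:ℝ)+1)^(-(2+s)) :=
      mul_pos (by linarith [hs_gt1]) (Real.rpow_pos_of_pos (by positivity) _)
    have hmono : (0:ℝ) ≤ ((n:ℝ))^(1-(2+s)) - ((n:ℝ)+1)^(1-(2+s)) := by nlinarith [hlow, hpos]
    exact mul_nonneg (le_of_lt hKpow) hmono
  calc ((K:ℝ)^(β:ℝ) * ((n:ℝ)^(1-β) - (((n:ℝ))+1)^(1-β)))^3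
      ≤ ((K:ℝ)^(β:ℝ) * ((1+s) * ((n:ℝ))^(-β)))^3 := by
        exact pow_le_pow_left₀ h0 h1 3
    _ = (1+s)^(3:ℕ) * ((K:ℝ)^(β:ℝ))^(3:ℕ) * (((n:ℝ))^(-β))^(3:ℕ) := by ring
    _ = (1+s)^(3:ℕ) * ((K:ℝ)^(β:ℝ))^(3:ℕ) * ((n:ℝ))^(-(3*β)) := by
        rw [pow3_rpow _ _ (le_of_lt hnpos)]
        congr 1
        ring_nf

lemma z_lower (K : ℕ) (hK : 1 ≤ K) (n : ℕ) (hn : K ≤ n) :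
    β * (K:ℝ)^(β:ℝ) * ((n:ℝ)+1)^(-β) ≤ SB K (n+1)/((n:ℝ)+1) - X K (n+1) := by
  have hn1 : ¬ (n+1 ≤ K) := by omega
  have hnpos : (0:ℝ) < (n:ℝ) := by
    have : (1:ℕ) ≤ n := le_trans hK hn
    exact_mod_cast Nat.lt_of_lt_of_le Nat.zero_lt_one this
  have hn1pos : (0:ℝ) < (n:ℝ)+1 := by linarith
  have hKpow : (0:ℝ) < (K:ℝ)^(β:ℝ) := Real.rpow_pos_of_pos (by exact_mod_cast hK) β
  have hSBv : SB K (n+1) = (K:ℝ)^(β:ℝ) * ((n:ℝ)+1)^(1-β) := by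
    rw [hSB K hK (n+1), if_neg hn1]; push_cast; ring_nf
  have hXv : X K (n+1) = (K:ℝ)^(β:ℝ) * (((n:ℝ)+1)^(1-β) - ((n:ℝ))^(1-β)) := by
    rw [X, if_neg hn1]
    have hred : ((n+1-1:ℕ):ℝ) = (n:ℝ) := by norm_num
    rw [hred]; push_cast; ring_nf
  have hdiv : ((n:ℝ)+1)^(1-β)/((n:ℝ)+1) = ((n:ℝ)+1)^(-β) := by
    rw [show (1-β : ℝ) = -β+1 by ring, Real.rpow_add_one (ne_of_gt hn1pos)]
    field_simp
  have hslope := (rpow_slope hβ1 hnpos (by linarith : (n:ℝ) < (n:ℝ)+1)).1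
  rw [show ((n:ℝ)+1) - (n:ℝ) = 1 by ring, mul_one] at hslope
  rw [hSBv, hXv]
  rw [mul_div_assoc, hdiv]
  have key : (β-1) * ((n:ℝ)+1)^(-β) ≤ ((n:ℝ))^(1-β) - ((n:ℝ)+1)^(1-β) := by
    have h := hslope
    nlinarith [h]
  nlinarith [mul_le_mul_of_nonneg_left key (le_of_lt hKpow), hKpow,
    Real.rpow_pos_of_pos hn1pos (-β)]

lemma termZ_tail_bound (K : ℕ) (hK : 1 ≤ K) (n : ℕ) (hn : K ≤ n) :
    β^(3:ℕ) * ((K:ℝ)^(β:ℝ))^(3:ℕ) * (((n+1:ℕ)):ℝ)^(-(3*β))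
      ≤ |SB K (n+1)/((n:ℝ)+1) - X K (n+1)|^3 := by
  have hn1pos : (0:ℝ) < (n:ℝ)+1 := by positivity
  have hKpow : (0:ℝ) < (K:ℝ)^(β:ℝ) := Real.rpow_pos_of_pos (by exact_mod_cast hK) β
  have hw : (0:ℝ) ≤ β * (K:ℝ)^(β:ℝ) * ((n:ℝ)+1)^(-β) := by
    have h := Real.rpow_pos_of_pos hn1pos (-β)
    exact le_of_lt (mul_pos (mul_pos (by linarith [hβ1] : (0:ℝ) < β) hKpow) h)
  have h1 := z_lower K hK n hn
  have h2 : β * (K:ℝ)^(β:ℝ) * ((n:ℝ)+1)^(-β) ≤ |SB K (n+1)/((n:ℝ)+1) - X K (n+1)| :=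
    le_trans h1 (le_abs_self _)
  have h3 := pow_le_pow_left₀ hw h2 3
  refine le_trans (le_of_eq ?_) h3
  have hc : (((n+1:ℕ)):ℝ) = (n:ℝ)+1 := by push_cast; ring
  rw [hc]
  rw [show (β * (K:ℝ)^(β:ℝ) * ((n:ℝ)+1)^(-β))^3
      = β^(3:ℕ) * ((K:ℝ)^(β:ℝ))^(3:ℕ) * (((n:ℝ)+1)^(-β))^(3:ℕ) by ring]
  rw [pow3_rpow _ _ (le_of_lt hn1pos)]
  congr 1
  ring_nf

/-- `C1` is `(1+√2)^3` -/
lemma den_bound (K : ℕ) (hK : 1 ≤ K) (N : ℕ) :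
    ∑ n ∈ Finset.range N, |X K (n+1)|^3
      ≤ (K:ℝ) * (1 + (1+s)^(3:ℕ)/(3*β-1)) + (1+s)^(3:ℕ) := by
  have hK0 : (0:ℝ) < (K:ℝ) := by exact_mod_cast hK
  have hq0 : (0:ℝ) < 3*β-1 := by linarith [hq1]
  have hC1 : (0:ℝ) ≤ (1+s)^(3:ℕ) := by positivity
  have hRHS2 : (0:ℝ) ≤ (K:ℝ) * ((1+s)^(3:ℕ)/(3*β-1)) := by positivity
  have hone : ∀ n : ℕ, n+1 ≤ K → |X K (n+1)|^3 = 1 := by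
    intro n h
    rw [X, if_pos h]; norm_num
  rcases le_or_gt N K with hNK | hNK
  · have : ∑ n ∈ Finset.range N, |X K (n+1)|^3 = N := by
      rw [Finset.sum_congr rfl (fun n hn => hone n (by
        have := Finset.mem_range.mp hn; omega))]
      simp
    rw [this]
    have : (N:ℝ) ≤ (K:ℝ) := by exact_mod_cast hNK
    nlinarith [hRHS2, hC1]
  · -- N > K
    have hsplit : ∑ n ∈ Finset.range N, |X K (n+1)|^3
        = ∑ n ∈ Finset.range K, |X K (n+1)|^3 + ∑ n ∈ Finset.Ico K N, |X K (n+1)|^3 := by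
      rw [Finset.range_eq_Ico, ← Finset.sum_Ico_consecutive _ (Nat.zero_le K) (le_of_lt hNK),
        ← Finset.range_eq_Ico]
    have hfirst : ∑ n ∈ Finset.range K, |X K (n+1)|^3 = K := by
      rw [Finset.sum_congr rfl (fun n hn => hone n (Finset.mem_range.mp hn))]
      simp
    -- second sum
    obtain ⟨M, hM⟩ : ∃ M, N = K + (M+1) := ⟨N - K - 1, by omega⟩
    have hIco : ∑ n ∈ Finset.Ico K N, |X K (n+1)|^3
        = ∑ i ∈ Finset.range (M+1), |X K (K+i+1)|^3 := by
      have hMM : K + (M+1) - K = M+1 := by omega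
      rw [hM, Finset.sum_Ico_eq_sum_range, hMM]
    have hshift : ∑ i ∈ Finset.range (M+1), |X K (K+i+1)|^3
        = (∑ i ∈ Finset.range M, |X K (K+(i+1)+1)|^3) + |X K (K+0+1)|^3 :=
      Finset.sum_range_succ' (fun i => |X K (K+i+1)|^3) M
    have hK3b : ((K:ℝ)^(β:ℝ))^(3:ℕ) = (K:ℝ)^(β*3) := pow3_rpow _ _ (le_of_lt hK0)
    have hhead : |X K (K+0+1)|^3 ≤ (1+s)^(3:ℕ) := by
      have h := termX_tail_bound K hK K (le_refl K)
      rw [show K+0+1 = K+1 by ring] at *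
      have he : ((K:ℝ)^(β:ℝ))^(3:ℕ) * ((K:ℝ))^(-(3*β)) = 1 := by
        rw [hK3b, ← Real.rpow_add hK0, show β*3 + -(3*β) = 0 by ring, Real.rpow_zero]
      calc |X K (K+1)|^3 ≤ (1+s)^(3:ℕ) * ((K:ℝ)^(β:ℝ))^(3:ℕ) * ((K:ℝ))^(-(3*β)) := h
        _ = (1+s)^(3:ℕ) := by rw [mul_assoc, he, mul_one]
    have htail : ∑ i ∈ Finset.range M, |X K (K+(i+1)+1)|^3
        ≤ (K:ℝ) * ((1+s)^(3:ℕ)/(3*β-1)) := by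
      have hterm : ∀ i ∈ Finset.range M, |X K (K+(i+1)+1)|^3
          ≤ (1+s)^(3:ℕ) * ((K:ℝ)^(β:ℝ))^(3:ℕ) * (((K+1+i:ℕ)):ℝ)^(-(3*β)) := by
        intro i _
        have h := termX_tail_bound K hK (K+1+i) (by omega)
        rw [show K+(i+1)+1 = K+1+i+1 by ring]
        exact h
      calc ∑ i ∈ Finset.range M, |X K (K+(i+1)+1)|^3
          ≤ ∑ i ∈ Finset.range M, (1+s)^(3:ℕ) * ((K:ℝ)^(β:ℝ))^(3:ℕ) * (((K+1+i:ℕ)):ℝ)^(-(3*β)) :=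
            Finset.sum_le_sum hterm
        _ = (1+s)^(3:ℕ) * ((K:ℝ)^(β:ℝ))^(3:ℕ)
            * ∑ i ∈ Finset.range M, (((K+1+i:ℕ)):ℝ)^(-(3*β)) := by
            rw [Finset.mul_sum]
        _ ≤ (1+s)^(3:ℕ) * ((K:ℝ)^(β:ℝ))^(3:ℕ) * ((K:ℝ)^(1-3*β) / (3*β-1)) := by
            apply mul_le_mul_of_nonneg_left (tele_upper (3*β) hq1 K M hK)
            positivity
        _ = (K:ℝ) * ((1+s)^(3:ℕ)/(3*β-1)) := by
            rw [hK3b]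
            have hKK : (K:ℝ)^(β*3) * (K:ℝ)^(1-3*β) = (K:ℝ) := by
              rw [← Real.rpow_add hK0, show β*3+(1-3*β) = 1 by ring, Real.rpow_one]
            rw [show (1+s)^(3:ℕ) * (K:ℝ)^(β*3) * ((K:ℝ)^(1-3*β) / (3*β-1))
                = ((K:ℝ)^(β*3) * (K:ℝ)^(1-3*β)) * (1+s)^(3:ℕ) / (3*β-1) by ring, hKK]
            ring
    rw [hsplit, hfirst, hIco, hshift]
    push_cast
    linarith [htail, hhead]

lemma num_partial (K : ℕ) (hK : 1 ≤ K) (M : ℕ) :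
    β^(3:ℕ) * ((K:ℝ)^(β:ℝ))^(3:ℕ)
        * (((K+1:ℕ):ℝ)^(1-3*β)/(3*β-1) - ((K+1+M:ℕ):ℝ)^(1-3*β)/(3*β-1))
      ≤ ∑ i ∈ Finset.range M, |SB K (K+i+1)/((((K+i:ℕ)):ℝ) + 1) - X K (K+i+1)|^3 := by
  have hK0 : (0:ℝ) < (K:ℝ) := by exact_mod_cast hK
  have hterm : ∀ i ∈ Finset.range M,
      β^(3:ℕ) * ((K:ℝ)^(β:ℝ))^(3:ℕ) * (((K+1+i:ℕ)):ℝ)^(-(3*β))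
        ≤ |SB K (K+i+1)/((((K+i:ℕ)):ℝ) + 1) - X K (K+i+1)|^3 := by
    intro i _
    have h := termZ_tail_bound K hK (K+i) (Nat.le_add_right K i)
    have hc : ((K+i+1:ℕ):ℝ) = ((K+1+i:ℕ):ℝ) := by push_cast; ring
    rw [show K+i+1 = (K+i)+1 by ring]
    rw [show ((K+i:ℕ):ℝ)+1 = ((K+i:ℕ):ℝ)+1 from rfl]
    calc β^(3:ℕ) * ((K:ℝ)^(β:ℝ))^(3:ℕ) * (((K+1+i:ℕ)):ℝ)^(-(3*β))
        = β^(3:ℕ) * ((K:ℝ)^(β:ℝ))^(3:ℕ) * ((((K+i)+1:ℕ)):ℝ)^(-(3*β)) := by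
          rw [show (((K+i)+1:ℕ):ℝ) = ((K+1+i:ℕ):ℝ) by push_cast; ring]
      _ ≤ _ := h
  calc β^(3:ℕ) * ((K:ℝ)^(β:ℝ))^(3:ℕ)
        * (((K+1:ℕ):ℝ)^(1-3*β)/(3*β-1) - ((K+1+M:ℕ):ℝ)^(1-3*β)/(3*β-1))
      ≤ β^(3:ℕ) * ((K:ℝ)^(β:ℝ))^(3:ℕ) * ∑ i ∈ Finset.range M, (((K+1+i:ℕ)):ℝ)^(-(3*β)) := by
        apply mul_le_mul_of_nonneg_left (tele_lower (3*β) hq1 K M hK)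
        positivity
    _ = ∑ i ∈ Finset.range M, β^(3:ℕ) * ((K:ℝ)^(β:ℝ))^(3:ℕ) * (((K+1+i:ℕ)):ℝ)^(-(3*β)) := by
        rw [Finset.mul_sum]
    _ ≤ _ := Finset.sum_le_sum hterm

lemma num_bound (K : ℕ) (hK : 1 ≤ K)
    (hsum : Summable (fun n : ℕ => |SB K (n+1)/((n:ℝ)+1) - X K (n+1)|^3)) :
    β^(3:ℕ) * ((K:ℝ)^(β:ℝ))^(3:ℕ) * (((K+1:ℕ):ℝ)^(1-3*β)/(3*β-1))
      ≤ ∑' n : ℕ, |SB K (n+1)/((n:ℝ)+1) - X K (n+1)|^3 := by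
  have hnn : ∀ n : ℕ, 0 ≤ |SB K (n+1)/((n:ℝ)+1) - X K (n+1)|^3 :=
    fun n => pow_nonneg (abs_nonneg _) 3
  set T := ∑' n : ℕ, |SB K (n+1)/((n:ℝ)+1) - X K (n+1)|^3 with hT
  have hpartial : ∀ M : ℕ,
      β^(3:ℕ) * ((K:ℝ)^(β:ℝ))^(3:ℕ)
        * (((K+1:ℕ):ℝ)^(1-3*β)/(3*β-1) - ((K+1+M:ℕ):ℝ)^(1-3*β)/(3*β-1)) ≤ T := by
    intro M
    refine le_trans (num_partial K hK M) ?_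
    have hIco : ∑ i ∈ Finset.range M, |SB K (K+i+1)/((((K+i:ℕ)):ℝ) + 1) - X K (K+i+1)|^3
        = ∑ n ∈ Finset.Ico K (K+M), |SB K (n+1)/((n:ℝ)+1) - X K (n+1)|^3 := by
      rw [Finset.sum_Ico_eq_sum_range]
      have hMM : K + M - K = M := by omega
      rw [hMM]
    rw [hIco]
    exact Summable.sum_le_tsum _ (fun i _ => hnn i) hsum
  -- pass to the limit M → ∞
  have htend : Filter.Tendsto (fun M : ℕ =>
      β^(3:ℕ) * ((K:ℝ)^(β:ℝ))^(3:ℕ)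
        * (((K+1:ℕ):ℝ)^(1-3*β)/(3*β-1) - ((K+1+M:ℕ):ℝ)^(1-3*β)/(3*β-1)))
      Filter.atTop
      (𝓝 (β^(3:ℕ) * ((K:ℝ)^(β:ℝ))^(3:ℕ) * (((K+1:ℕ):ℝ)^(1-3*β)/(3*β-1)))) := by
    have h0 : Filter.Tendsto (fun M : ℕ => ((K+1+M:ℕ):ℝ)) Filter.atTop Filter.atTop := by
      have : (fun M : ℕ => ((K+1+M:ℕ):ℝ)) = fun M : ℕ => ((K+1:ℕ):ℝ) + (M:ℝ) := by
        funext M; push_cast; ring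
      rw [this]
      exact tendsto_atTop_add_const_left _ _ tendsto_natCast_atTop_atTop
    have h1 : Filter.Tendsto (fun M : ℕ => ((K+1+M:ℕ):ℝ)^(1-3*β)) Filter.atTop (𝓝 0) := by
      have hneg : Filter.Tendsto (fun x : ℝ => x^(1-3*β)) Filter.atTop (𝓝 0) := by
        rw [show (1-3*β : ℝ) = -(3*β-1) by ring]
        exact tendsto_rpow_neg_atTop (y := 3*β-1) (by linarith [hq1])
      exact hneg.comp h0
    have h2 : Filter.Tendsto (fun M : ℕ => ((K+1+M:ℕ):ℝ)^(1-3*β)/(3*β-1)) Filter.atTop (𝓝 0) := by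
      have := h1.div_const (3*β-1)
      simpa using this
    have h3 : Filter.Tendsto (fun M : ℕ =>
        (((K+1:ℕ):ℝ)^(1-3*β)/(3*β-1) - ((K+1+M:ℕ):ℝ)^(1-3*β)/(3*β-1))) Filter.atTop
        (𝓝 (((K+1:ℕ):ℝ)^(1-3*β)/(3*β-1) - 0)) := Filter.Tendsto.sub tendsto_const_nhds h2
    have h4 := h3.const_mul (β^(3:ℕ) * ((K:ℝ)^(β:ℝ))^(3:ℕ))
    simpa using h4
  exact le_of_tendsto htend (Filter.Eventually.of_forall hpartial)

lemma numlb_eq (K : ℕ) (hK : 1 ≤ K) :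
    β^(3:ℕ) * ((K:ℝ)^(β:ℝ))^(3:ℕ) * (((K+1:ℕ):ℝ)^(1-3*β)/(3*β-1))
      = (β^(3:ℕ)/(3*β-1)) * (K:ℝ) * (1+1/(K:ℝ))^(1-3*β) := by
  have hK0 : (0:ℝ) < (K:ℝ) := by exact_mod_cast hK
  have h1 : ((K+1:ℕ):ℝ) = (K:ℝ)*(1+1/(K:ℝ)) := by
    push_cast; field_simp
  rw [h1, Real.mul_rpow (le_of_lt hK0) (by positivity), pow3_rpow _ _ (le_of_lt hK0)]
  have h2 : (K:ℝ)^(β*3) * (K:ℝ)^(1-3*β) = (K:ℝ) := by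
    rw [← Real.rpow_add hK0, show β*3+(1-3*β) = 1 by ring, Real.rpow_one]
  rw [show β^(3:ℕ) * (K:ℝ)^(β*3) * (((K:ℝ)^(1-3*β) * (1+1/(K:ℝ))^(1-3*β))/(3*β-1))
      = ((K:ℝ)^(β*3) * (K:ℝ)^(1-3*β)) * β^(3:ℕ) * (1+1/(K:ℝ))^(1-3*β) / (3*β-1) by ring, h2]
  ring

lemma exists_goodK (c : ℝ) (hc : c < (2-s)⁻¹) (hc0 : 0 < c) :
    ∃ K : ℕ, 1 ≤ K ∧
      c * ((K:ℝ)*(1 + (1+s)^(3:ℕ)/(3*β-1)) + (1+s)^(3:ℕ))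
        < β^(3:ℕ) * ((K:ℝ)^(β:ℝ))^(3:ℕ) * (((K+1:ℕ):ℝ)^(1-3*β)/(3*β-1)) := by
  have hm_pos : (0:ℝ) < 2 - s := by linarith [hs_lt2]
  have hq0 : (0:ℝ) < 3*β-1 := by linarith [hq1]
  set A : ℝ := β^(3:ℕ)/(3*β-1) with hA
  set B : ℝ := 1 + (1+s)^(3:ℕ)/(3*β-1) with hB
  have hApos : 0 < A := by
    apply div_pos _ hq0
    positivity
  have hid : (2-s)*(2+s)^(3:ℕ) = 3*(2+s)-1+(1+s)^(3:ℕ) := by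
    linear_combination (-(Real.sqrt 2)^2-5*Real.sqrt 2-5)*hs2
  have hBA : B = (2-s)*A := by
    rw [hB, hA]
    field_simp
    linarith [hid]
  have hcBA : c*B < A*1 - 0 := by
    have h1 := mul_lt_mul_of_pos_right hc hm_pos
    rw [inv_mul_cancel₀ (ne_of_gt hm_pos)] at h1
    rw [hBA]
    nlinarith [hApos]
  have t1 : Filter.Tendsto (fun K : ℕ => 1+1/(K:ℝ)) Filter.atTop (𝓝 1) := by
    have h := Filter.Tendsto.add (tendsto_const_nhds : Filter.Tendsto (fun _ : ℕ => (1:ℝ)) Filter.atTop (𝓝 1)) tendsto_one_div_atTop_nhds_zero_nat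
    simpa using h
  have t2 : Filter.Tendsto (fun K : ℕ => (1+1/(K:ℝ))^(1-3*β)) Filter.atTop (𝓝 1) := by
    have h := t1.rpow_const (p := 1-3*β) (Or.inl one_ne_zero)
    simpa using h
  have t3 : Filter.Tendsto (fun K : ℕ => c*(1+s)^(3:ℕ)/(K:ℝ)) Filter.atTop (𝓝 0) :=
    tendsto_const_div_atTop_nhds_zero_nat _
  have htend : Filter.Tendsto (fun K : ℕ => A*(1+1/(K:ℝ))^(1-3*β) - c*(1+s)^(3:ℕ)/(K:ℝ))
      Filter.atTop (𝓝 (A*1 - 0)) := (t2.const_mul A).sub t3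
  have hev := (htend.eventually (eventually_gt_nhds hcBA)).and (Filter.eventually_ge_atTop 1)
  obtain ⟨K, hKgt, hK1⟩ := hev.exists
  refine ⟨K, hK1, ?_⟩
  rw [numlb_eq K hK1]
  have hK0 : (0:ℝ) < (K:ℝ) := by exact_mod_cast hK1
  have h5 := mul_lt_mul_of_pos_left hKgt hK0
  have h6 : (K:ℝ) * (c*(1+s)^(3:ℕ)/(K:ℝ)) = c*(1+s)^(3:ℕ) := by field_simp
  rw [mul_sub, h6] at h5
  rw [hB] at h5
  rw [← hA]
  nlinarith [h5]

lemma habs3 (a : ℝ) : |a| ^ (3:ℝ) = |a|^(3:ℕ) := by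
  rw [show (3:ℝ) = ((3:ℕ):ℝ) by norm_num, Real.rpow_natCast]

lemma numlb_pos (K : ℕ) (hK : 1 ≤ K) :
    0 < β^(3:ℕ) * ((K:ℝ)^(β:ℝ))^(3:ℕ) * (((K+1:ℕ):ℝ)^(1-3*β)/(3*β-1)) := by
  have hK0 : (0:ℝ) < (K:ℝ) := by exact_mod_cast hK
  have hq0 : (0:ℝ) < 3*β-1 := by linarith [hq1]
  have h1 : (0:ℝ) < β := by linarith [hs_nonneg]
  exact mul_pos (mul_pos (pow_pos h1 3) (pow_pos (Real.rpow_pos_of_pos hK0 β) 3))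
    (div_pos (Real.rpow_pos_of_pos (by positivity) _) hq0)

end Stmt18Aux

open Stmt18Aux in
/-- The case `p = 3`: the minimum value of `f_3(t) = 3t² + (1-t)³ - t³` on `[0, 1/2]`
equals `2 - √2` (i.e. `m_3 = 2 - √2`); consequently the operator norm of `C - I` on `ℓ^3`
equals `(2 - √2)^(-1/3)`, i.e. the inequality `∑ |y_n - x_n|³ ≤ (2 - √2)⁻¹ ∑ |x_n|³`
holds with `y_n = (1/n) ∑_{k=1}^n x_k`, and `(2 - √2)⁻¹` is the least such constant.
(Sequences are indexed so that term `n` of the paper is `x (n+1)` here, `n : ℕ`.) -/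
theorem stmt18 :
    IsLeast ((fun t : ℝ => 3 * t ^ 2 + (1 - t) ^ 3 - t ^ 3) '' Set.Icc 0 (1 / 2))
      (2 - Real.sqrt 2) ∧
    (∀ x : ℕ → ℝ, (Summable fun n : ℕ => |x (n + 1)| ^ (3 : ℝ)) →
      ∑' n : ℕ,
          |(1 / ((n : ℝ) + 1)) * (∑ k ∈ Finset.range (n + 1), x (k + 1)) - x (n + 1)| ^ (3 : ℝ)
        ≤ (2 - Real.sqrt 2)⁻¹ * ∑' n : ℕ, |x (n + 1)| ^ (3 : ℝ)) ∧
    ∀ c : ℝ, c < (2 - Real.sqrt 2)⁻¹ → ∃ x : ℕ → ℝ,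
      (Summable fun n : ℕ => |x (n + 1)| ^ (3 : ℝ)) ∧
      0 < ∑' n : ℕ, |x (n + 1)| ^ (3 : ℝ) ∧
      c * ∑' n : ℕ, |x (n + 1)| ^ (3 : ℝ) <
        ∑' n : ℕ,
          |(1 / ((n : ℝ) + 1)) * (∑ k ∈ Finset.range (n + 1), x (k + 1)) - x (n + 1)| ^ (3 : ℝ) := by
  have e2 : ∀ x : ℕ → ℝ, ∀ n : ℕ,
      |(1 / ((n : ℝ) + 1)) * (∑ k ∈ Finset.range (n + 1), x (k + 1)) - x (n + 1)| ^ (3 : ℝ)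
        = |S x (n+1) / ((n:ℝ)+1) - x (n+1)|^(3:ℕ) := by
    intro x n
    rw [habs3, one_div_mul_eq_div]
    rfl
  refine ⟨part1, ?_, ?_⟩
  · intro x hx
    have hx' : Summable (fun n : ℕ => |x (n+1)|^(3:ℕ)) :=
      hx.congr (fun n => habs3 _)
    have h := upper x hx'
    have t1 : (∑' n : ℕ,
        |(1 / ((n : ℝ) + 1)) * (∑ k ∈ Finset.range (n + 1), x (k + 1)) - x (n + 1)| ^ (3 : ℝ))
        = ∑' n : ℕ, |S x (n+1) / ((n:ℝ)+1) - x (n+1)|^(3:ℕ) := tsum_congr (e2 x)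
    have t2 : (∑' n : ℕ, |x (n+1)| ^ (3:ℝ)) = ∑' n : ℕ, |x (n+1)|^(3:ℕ) :=
      tsum_congr (fun n => habs3 _)
    rw [t1, t2]
    exact h.2
  · intro c hc
    have hKchoice : ∃ K : ℕ, 1 ≤ K ∧
        (c ≤ 0 ∨ (0 < c ∧ c * ((K:ℝ)*(1 + (1+Real.sqrt 2)^(3:ℕ)/(3*(2+Real.sqrt 2)-1)) + (1+Real.sqrt 2)^(3:ℕ))
          < (2+Real.sqrt 2)^(3:ℕ) * ((K:ℝ)^((2+Real.sqrt 2):ℝ))^(3:ℕ) * (((K+1:ℕ):ℝ)^(1-3*(2+Real.sqrt 2))/(3*(2+Real.sqrt 2)-1)))) := by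
      rcases le_or_gt c 0 with hc0 | hc0
      · exact ⟨1, le_refl 1, Or.inl hc0⟩
      · obtain ⟨K, hK1, hKlt⟩ := exists_goodK c hc hc0
        exact ⟨K, hK1, Or.inr ⟨hc0, hKlt⟩⟩
    obtain ⟨K, hK1, hKalt⟩ := hKchoice
    have hsumX : Summable (fun n : ℕ => |X K (n+1)|^(3:ℕ)) :=
      summable_of_sum_range_le (fun n => pow_nonneg (abs_nonneg _) 3) (den_bound K hK1)
    have hden : (∑' n : ℕ, |X K (n+1)|^(3:ℕ))
        ≤ (K:ℝ) * (1 + (1+Real.sqrt 2)^(3:ℕ)/(3*(2+Real.sqrt 2)-1)) + (1+Real.sqrt 2)^(3:ℕ) :=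
      Summable.tsum_le_of_sum_range_le hsumX (den_bound K hK1)
    have hupper := upper (X K) hsumX
    have hsumZ : Summable (fun n : ℕ => |SB K (n+1) / ((n:ℝ)+1) - X K (n+1)|^(3:ℕ)) := hupper.1
    have hnum := num_bound K hK1 hsumZ
    have hpos : 0 < ∑' n : ℕ, |X K (n+1)|^(3:ℕ) := by
      refine Summable.tsum_pos hsumX (fun n => pow_nonneg (abs_nonneg _) 3) 0 ?_
      rw [X_one K hK1]
      norm_num
    have key : c * (∑' n : ℕ, |X K (n+1)|^(3:ℕ))
        < ∑' n : ℕ, |SB K (n+1) / ((n:ℝ)+1) - X K (n+1)|^(3:ℕ) := by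
      rcases hKalt with hc0 | ⟨hc0, hKlt⟩
      · have h1 : c * (∑' n : ℕ, |X K (n+1)|^(3:ℕ)) ≤ 0 := by nlinarith [hpos]
        have h2 := numlb_pos K hK1
        linarith [hnum]
      · calc c * (∑' n : ℕ, |X K (n+1)|^(3:ℕ))
            ≤ c * ((K:ℝ) * (1 + (1+Real.sqrt 2)^(3:ℕ)/(3*(2+Real.sqrt 2)-1)) + (1+Real.sqrt 2)^(3:ℕ)) :=
              mul_le_mul_of_nonneg_left hden (le_of_lt hc0)
          _ < (2+Real.sqrt 2)^(3:ℕ) * ((K:ℝ)^((2+Real.sqrt 2):ℝ))^(3:ℕ) * (((K+1:ℕ):ℝ)^(1-3*(2+Real.sqrt 2))/(3*(2+Real.sqrt 2)-1)) := hKlt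
          _ ≤ _ := hnum
    have t2 : (∑' n : ℕ, |X K (n+1)| ^ (3:ℝ)) = ∑' n : ℕ, |X K (n+1)|^(3:ℕ) :=
      tsum_congr (fun n => habs3 _)
    have t1 : (∑' n : ℕ,
        |(1 / ((n : ℝ) + 1)) * (∑ k ∈ Finset.range (n + 1), X K (k + 1)) - X K (n + 1)| ^ (3 : ℝ))
        = ∑' n : ℕ, |SB K (n+1) / ((n:ℝ)+1) - X K (n+1)|^(3:ℕ) := tsum_congr (e2 (X K))
    refine ⟨X K, hsumX.congr (fun n => (habs3 _).symm), ?_, ?_⟩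
    · rw [t2]; exact hpos
    · rw [t1, t2]; exact key
end
end
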